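/- arXiv:2304.05000 — 2 statements merged into one kernel-verified Lean document; each statement's English description precedes it below -/
import Mathlib

section
/- Let R be a left-symmetric conformal algebra, Q a ℂ[∂]-module, E = R ⊕ Q the direct sum of ℂ[∂]-modules, and 𝔏(R,Q) the set of all left-symmetric conformal extending structures of R by Q. Then the assignment sending an extending structure Ω(R,Q) to the unified product structure (R♮Q, ·_λ·) on E induces a well-defined bijection from the quotient 𝓗²(Q,R) := 𝔏(R,Q)/≈ onto CExtd′(E,R), the set of equivalence classes (under isomorphisms stabilizing R and co-stabilizing Q) of left-symmetric conformal algebra structures on E containing R as a subalgebra. -/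
open Finsupp Polynomial

noncomputable section

/-- One-variable conformal polynomials in λ with coefficients in `W`:
the coefficient of `λ^n` sits at index `n`. -/
abbrev OP (W : Type*) [Zero W] := ℕ →₀ W

/-- Two-variable conformal polynomials in λ, μ with coefficients in `W`. -/
abbrev TP (W : Type*) [Zero W] := (ℕ × ℕ) →₀ W

section Defs

variable {U V W L : Type*}
variable [AddCommGroup U] [Module ℂ U] [AddCommGroup V] [Module ℂ V]
variable [AddCommGroup W] [Module ℂ W] [AddCommGroup L] [Module ℂ L]

/-- Multiplication by the variable λ on one-variable polynomials. -/
def lsh : OP W →ₗ[ℂ] OP W := Finsupp.lmapDomain W ℂ (· + 1)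

/-- Multiplication by λ on two-variable polynomials. -/
def LX : TP W →ₗ[ℂ] TP W := Finsupp.lmapDomain W ℂ (fun p => (p.1 + 1, p.2))

/-- Multiplication by μ on two-variable polynomials. -/
def LY : TP W →ₗ[ℂ] TP W := Finsupp.lmapDomain W ℂ (fun p => (p.1, p.2 + 1))

/-- Coefficientwise action of ∂ on one-variable polynomials. -/
def pD (dW : W →ₗ[ℂ] W) : OP W →ₗ[ℂ] OP W := Finsupp.mapRange.linearMap dW

/-- Coefficientwise action of ∂ on two-variable polynomials. -/
def PD (dW : W →ₗ[ℂ] W) : TP W →ₗ[ℂ] TP W := Finsupp.mapRange.linearMap dW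

/-- The operator −λ−∂ on one-variable polynomials. -/
def nD (dW : W →ₗ[ℂ] W) : OP W →ₗ[ℂ] OP W := -lsh - pD dW

/-- The operator −λ−∂ on two-variable polynomials. -/
def nX (dW : W →ₗ[ℂ] W) : TP W →ₗ[ℂ] TP W := -LX - PD dW

/-- The operator −μ−∂ on two-variable polynomials. -/
def nY (dW : W →ₗ[ℂ] W) : TP W →ₗ[ℂ] TP W := -LY - PD dW

/-- The operator −λ−μ−∂ on two-variable polynomials. -/
def nXY (dW : W →ₗ[ℂ] W) : TP W →ₗ[ℂ] TP W := -LX - LY - PD dW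

/-- Substitution of a (commuting) operator `A` for the variable of a one-variable
polynomial, with values in two-variable polynomials. -/
def evA (A : TP W →ₗ[ℂ] TP W) : OP W →ₗ[ℂ] TP W :=
  Finsupp.lsum ℂ (fun k => (A ^ k) ∘ₗ Finsupp.lsingle ((0, 0) : ℕ × ℕ))

/-- Substitution of an operator `A` for the variable of a one-variable polynomial. -/
def evA1 (A : OP W →ₗ[ℂ] OP W) : OP W →ₗ[ℂ] OP W :=
  Finsupp.lsum ℂ (fun k => (A ^ k) ∘ₗ Finsupp.lsingle (0 : ℕ))

/-- `u_A v`: the pairing `m` evaluated with the variable replaced by the operator `A`. -/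
def ev2 (m : U →ₗ[ℂ] V →ₗ[ℂ] OP W) (A : TP W →ₗ[ℂ] TP W) (u : U) (v : V) : TP W :=
  evA A (m u v)

/-- Extension of the pairing `m`, in its first argument, to two-variable polynomials. -/
def exL (m : U →ₗ[ℂ] V →ₗ[ℂ] OP W) (A : TP W →ₗ[ℂ] TP W) (p : TP U) (v : V) : TP W :=
  Finsupp.sum p fun ij u => (LX ^ ij.1) ((LY ^ ij.2) (evA A (m u v)))

/-- Extension of the pairing `m`, in its second argument, to two-variable polynomials. -/
def exR (m : U →ₗ[ℂ] V →ₗ[ℂ] OP W) (A : TP W →ₗ[ℂ] TP W) (u : U) (p : TP V) : TP W :=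
  Finsupp.sum p fun ij v => (LX ^ ij.1) ((LY ^ ij.2) (evA A (m u v)))

/-- Extension of a unary conformal-linear map to two-variable polynomials. -/
def exU (D : U →ₗ[ℂ] OP W) (A : TP W →ₗ[ℂ] TP W) (p : TP U) : TP W :=
  Finsupp.sum p fun ij u => (LX ^ ij.1) ((LY ^ ij.2) (evA A (D u)))

/-- Coefficientwise application of a linear map to a one-variable polynomial. -/
def pMap (f : U →ₗ[ℂ] W) : OP U →ₗ[ℂ] OP W := Finsupp.mapRange.linearMap f

/-- A conformal bilinear map: `f(∂u, v) = −λ f(u,v)` and `f(u, ∂v) = (λ+∂) f(u,v)`. -/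
structure ConfBilin (dU : U →ₗ[ℂ] U) (dV : V →ₗ[ℂ] V) (dW : W →ₗ[ℂ] W)
    (m : U →ₗ[ℂ] V →ₗ[ℂ] OP W) : Prop where
  dleft : ∀ u v, m (dU u) v = -lsh (m u v)
  dright : ∀ u v, m u (dV v) = lsh (m u v) + pD dW (m u v)

/-- A left-symmetric conformal algebra structure on the ℂ[∂]-module `(L, dL)`. -/
structure IsLSCA (dL : L →ₗ[ℂ] L) (m : L →ₗ[ℂ] L →ₗ[ℂ] OP L) : Prop where
  conf : ConfBilin dL dL dL m
  lsym : ∀ a b c : L,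
    exL m (LX + LY) (ev2 m LX a b) c - exR m LX a (ev2 m LY b c)
      = exL m (LX + LY) (ev2 m LY b a) c - exR m LY b (ev2 m LX a c)

/-- The commutator λ-bracket `[u_λ v] = u_λ v − v_{−λ−∂} u`. -/
def commut (dL : L →ₗ[ℂ] L) (m : L →ₗ[ℂ] L →ₗ[ℂ] OP L) : L →ₗ[ℂ] L →ₗ[ℂ] OP L :=
  m - (m.compr₂ (evA1 (nD dL))).flip

/-- A Lie conformal algebra structure on the ℂ[∂]-module `(L, dL)`. -/
structure IsLieCA (dL : L →ₗ[ℂ] L) (br : L →ₗ[ℂ] L →ₗ[ℂ] OP L) : Prop where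
  dleft : ∀ u v, br (dL u) v = -lsh (br u v)
  dright : ∀ u v, br u (dL v) = lsh (br u v) + pD dL (br u v)
  skew : ∀ u v, br u v = -evA1 (nD dL) (br v u)
  jacobi : ∀ a b c : L,
    exR br LX a (ev2 br LY b c)
      = exL br (LX + LY) (ev2 br LX a b) c + exR br LY b (ev2 br LX a c)

end Defs

section Ext

variable {R Q : Type*} [AddCommGroup R] [Module ℂ R] [AddCommGroup Q] [Module ℂ Q]

/-- An extending datum of a left-symmetric conformal algebra `R` by a ℂ[∂]-module `Q`. -/
structure ExtDatum (dR : R →ₗ[ℂ] R) (dQ : Q →ₗ[ℂ] Q) where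
  phi : Q →ₗ[ℂ] R →ₗ[ℂ] OP R
  psi : Q →ₗ[ℂ] R →ₗ[ℂ] OP R
  l : R →ₗ[ℂ] Q →ₗ[ℂ] OP Q
  r : R →ₗ[ℂ] Q →ₗ[ℂ] OP Q
  g : Q →ₗ[ℂ] Q →ₗ[ℂ] OP R
  o : Q →ₗ[ℂ] Q →ₗ[ℂ] OP Q
  hphi : ConfBilin dQ dR dR phi
  hpsi : ConfBilin dQ dR dR psi
  hl : ConfBilin dR dQ dQ l
  hr : ConfBilin dR dQ dQ r
  hg : ConfBilin dQ dQ dR g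
  ho : ConfBilin dQ dQ dQ o

/-- Embedding of `R`-valued polynomials into `(R ⊕ Q)`-valued polynomials. -/
def inlP (R Q : Type*) [AddCommGroup R] [Module ℂ R] [AddCommGroup Q] [Module ℂ Q] :
    OP R →ₗ[ℂ] OP (R × Q) := Finsupp.mapRange.linearMap (LinearMap.inl ℂ R Q)

/-- Embedding of `Q`-valued polynomials into `(R ⊕ Q)`-valued polynomials. -/
def inrP (R Q : Type*) [AddCommGroup R] [Module ℂ R] [AddCommGroup Q] [Module ℂ Q] :
    OP Q →ₗ[ℂ] OP (R × Q) := Finsupp.mapRange.linearMap (LinearMap.inr ℂ R Q)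

/-- The λ-product of the unified product `R ♮ Q`:
`(a+x) _λ (b+y) = (a_λ b + φ(x)_λ b + ψ(y)_{−λ−∂} a + g_λ(x,y)) + (x∘_λ y + l(a)_λ y + r(b)_{−λ−∂} x)`. -/
def uprod (dR : R →ₗ[ℂ] R) (dQ : Q →ₗ[ℂ] Q) (Ω : ExtDatum dR dQ)
    (m : R →ₗ[ℂ] R →ₗ[ℂ] OP R) :
    (R × Q) →ₗ[ℂ] (R × Q) →ₗ[ℂ] OP (R × Q) :=
  ((m.compl₁₂ (LinearMap.fst ℂ R Q) (LinearMap.fst ℂ R Q)).compr₂ (inlP R Q))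
    + ((Ω.phi.compl₁₂ (LinearMap.snd ℂ R Q) (LinearMap.fst ℂ R Q)).compr₂ (inlP R Q))
    + (((Ω.psi.compl₁₂ (LinearMap.snd ℂ R Q) (LinearMap.fst ℂ R Q)).compr₂
        (inlP R Q ∘ₗ evA1 (nD dR))).flip)
    + ((Ω.g.compl₁₂ (LinearMap.snd ℂ R Q) (LinearMap.snd ℂ R Q)).compr₂ (inlP R Q))
    + ((Ω.o.compl₁₂ (LinearMap.snd ℂ R Q) (LinearMap.snd ℂ R Q)).compr₂ (inrP R Q))
    + ((Ω.l.compl₁₂ (LinearMap.fst ℂ R Q) (LinearMap.snd ℂ R Q)).compr₂ (inrP R Q))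
    + (((Ω.r.compl₁₂ (LinearMap.fst ℂ R Q) (LinearMap.snd ℂ R Q)).compr₂
        (inrP R Q ∘ₗ evA1 (nD dQ))).flip)

lemma uprod_apply (dR : R →ₗ[ℂ] R) (dQ : Q →ₗ[ℂ] Q) (Ω : ExtDatum dR dQ)
    (m : R →ₗ[ℂ] R →ₗ[ℂ] OP R) (e₁ e₂ : R × Q) :
    uprod dR dQ Ω m e₁ e₂ =
      inlP R Q (m e₁.1 e₂.1 + Ω.phi e₁.2 e₂.1 + evA1 (nD dR) (Ω.psi e₂.2 e₁.1) + Ω.g e₁.2 e₂.2)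
      + inrP R Q (Ω.o e₁.2 e₂.2 + Ω.l e₁.1 e₂.2 + evA1 (nD dQ) (Ω.r e₂.1 e₁.2)) := by
  simp [uprod, LinearMap.add_apply, LinearMap.compr₂_apply, LinearMap.compl₁₂_apply,
    LinearMap.flip_apply, map_add, LinearMap.comp_apply]
  abel

lemma uprod_res (dR : R →ₗ[ℂ] R) (dQ : Q →ₗ[ℂ] Q) (Ω : ExtDatum dR dQ)
    (m : R →ₗ[ℂ] R →ₗ[ℂ] OP R) (a b : R) :
    uprod dR dQ Ω m (a, (0 : Q)) (b, 0) = inlP R Q (m a b) := by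
  rw [uprod_apply]
  simp

/-- Isomorphism property of left-symmetric conformal algebra structures, via
a ℂ[∂]-module automorphism `T` of the underlying module `E`. -/
structure IsIsoLSCA {E : Type*} [AddCommGroup E] [Module ℂ E] (dE : E →ₗ[ℂ] E)
    (m₁ m₂ : E →ₗ[ℂ] E →ₗ[ℂ] OP E) (T : E ≃ₗ[ℂ] E) : Prop where
  dcomm : ∀ e, T (dE e) = dE (T e)
  mult : ∀ u v, m₂ (T u) (T v) = pMap (T : E →ₗ[ℂ] E) (m₁ u v)

/-- `T` stabilizes `R`, i.e. `T ∘ i = i` for the inclusion `i : R → R ⊕ Q`. -/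
def Stab (T : (R × Q) ≃ₗ[ℂ] (R × Q)) : Prop := ∀ a : R, T (a, 0) = (a, 0)

/-- `T` co-stabilizes `Q`, i.e. `π ∘ T = π` for the projection `π : R ⊕ Q → Q`. -/
def Costab (T : (R × Q) ≃ₗ[ℂ] (R × Q)) : Prop := ∀ e, (T e).2 = e.2

end Ext

section Equivalences

variable {R Q : Type*} [AddCommGroup R] [Module ℂ R] [AddCommGroup Q] [Module ℂ Q]

/-- The compatibility conditions (3.9)–(3.14) of Definition 3.10, relating the extending
structures `Ω` and `Ω'` through the pair of ℂ[∂]-module maps `(u, v)`. -/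
def DatumRel (dR : R →ₗ[ℂ] R) (dQ : Q →ₗ[ℂ] Q) (m : R →ₗ[ℂ] R →ₗ[ℂ] OP R)
    (Ω Ω' : ExtDatum dR dQ) (u : Q →ₗ[ℂ] R) (v : Q →ₗ[ℂ] Q) : Prop :=
  (∀ (a : R) (x : Q), evA1 (nD dR) (Ω.psi x a) + pMap u (Ω.l a x)
      = m a (u x) + evA1 (nD dR) (Ω'.psi (v x) a)) ∧
  (∀ (a : R) (x : Q), pMap v (Ω.l a x) = Ω'.l a (v x)) ∧
  (∀ (a : R) (x : Q), Ω.phi x a + pMap u (evA1 (nD dQ) (Ω.r a x))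
      = m (u x) a + Ω'.phi (v x) a) ∧
  (∀ (a : R) (x : Q), pMap v (evA1 (nD dQ) (Ω.r a x)) = evA1 (nD dQ) (Ω'.r a (v x))) ∧
  (∀ x y : Q, Ω.g x y + pMap u (Ω.o x y)
      = m (u x) (u y) + Ω'.phi (v x) (u y) + evA1 (nD dR) (Ω'.psi (v y) (u x))
        + Ω'.g (v x) (v y)) ∧
  (∀ x y : Q, pMap v (Ω.o x y)
      = evA1 (nD dQ) (Ω'.r (u y) (v x)) + Ω'.l (u x) (v y) + Ω'.o (v x) (v y))

/-- `Ω ≡ Ω'` : the extending structures are equivalent. -/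
def DatumEquiv (dR : R →ₗ[ℂ] R) (dQ : Q →ₗ[ℂ] Q) (m : R →ₗ[ℂ] R →ₗ[ℂ] OP R)
    (Ω Ω' : ExtDatum dR dQ) : Prop :=
  ∃ (u : Q →ₗ[ℂ] R) (v : Q ≃ₗ[ℂ] Q),
    (∀ q, u (dQ q) = dR (u q)) ∧ (∀ q, v (dQ q) = dQ (v q)) ∧
    DatumRel dR dQ m Ω Ω' u (v : Q →ₗ[ℂ] Q)

/-- `Ω ≈ Ω'` : the extending structures are cohomologous (`v = Id`). -/
def DatumCohom (dR : R →ₗ[ℂ] R) (dQ : Q →ₗ[ℂ] Q) (m : R →ₗ[ℂ] R →ₗ[ℂ] OP R)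
    (Ω Ω' : ExtDatum dR dQ) : Prop :=
  ∃ u : Q →ₗ[ℂ] R,
    (∀ q, u (dQ q) = dR (u q)) ∧ DatumRel dR dQ m Ω Ω' u LinearMap.id

end Equivalences

section Classify

variable {V U W R Q : Type*}
variable [AddCommGroup U] [Module ℂ U] [AddCommGroup V] [Module ℂ V]
variable [AddCommGroup W] [Module ℂ W]
variable [AddCommGroup R] [Module ℂ R] [AddCommGroup Q] [Module ℂ Q]

lemma pMap_single (f : U →ₗ[ℂ] W) (n : ℕ) (w : U) :
    pMap f (Finsupp.single n w) = Finsupp.single n (f w) := by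
  simp [pMap]

lemma lsh_single (n : ℕ) (w : W) :
    lsh (Finsupp.single n w) = Finsupp.single (n + 1) w := by
  simp [lsh, Finsupp.mapDomain_single]

lemma pD_single (d : W →ₗ[ℂ] W) (n : ℕ) (w : W) :
    pD d (Finsupp.single n w) = Finsupp.single n (d w) := by
  simp [pD]

lemma evA1_single (A : OP W →ₗ[ℂ] OP W) (k : ℕ) (w : W) :
    evA1 A (Finsupp.single k w) = (A ^ k) (Finsupp.single 0 w) := by
  simp [evA1]

lemma nD_apply (d : W →ₗ[ℂ] W) (p : OP W) : nD d p = -lsh p - pD d p := by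
  simp [nD]

lemma pMap_comp (f : U →ₗ[ℂ] W) (g : V →ₗ[ℂ] U) (p : OP V) :
    pMap f (pMap g p) = pMap (f ∘ₗ g) p :=
  LinearMap.congr_fun (Finsupp.lhom_ext (φ := (pMap f) ∘ₗ (pMap g)) (ψ := pMap (f ∘ₗ g))
    fun n w => by simp [pMap_single]) p

lemma pMap_id (p : OP W) : pMap (LinearMap.id : W →ₗ[ℂ] W) p = p :=
  LinearMap.congr_fun (Finsupp.lhom_ext (φ := pMap (LinearMap.id : W →ₗ[ℂ] W))
    (ψ := LinearMap.id) fun n w => by simp [pMap_single]) p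

lemma pMap_add (f g : U →ₗ[ℂ] W) (p : OP U) :
    pMap (f + g) p = pMap f p + pMap g p :=
  LinearMap.congr_fun (Finsupp.lhom_ext (φ := pMap (f + g)) (ψ := pMap f + pMap g)
    fun n w => by simp [pMap_single, Finsupp.single_add]) p

lemma pMap_lsh (f : U →ₗ[ℂ] W) (p : OP U) : pMap f (lsh p) = lsh (pMap f p) :=
  LinearMap.congr_fun (Finsupp.lhom_ext (φ := (pMap f) ∘ₗ (lsh : OP U →ₗ[ℂ] OP U)) (ψ := (lsh : OP W →ₗ[ℂ] OP W) ∘ₗ pMap f)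
    fun n w => by simp [pMap_single, lsh_single]) p

lemma pMap_pD (f : U →ₗ[ℂ] W) (dU : U →ₗ[ℂ] U) (dW : W →ₗ[ℂ] W)
    (h : ∀ v, f (dU v) = dW (f v)) (p : OP U) :
    pMap f (pD dU p) = pD dW (pMap f p) :=
  LinearMap.congr_fun (Finsupp.lhom_ext (φ := (pMap f) ∘ₗ pD dU) (ψ := pD dW ∘ₗ pMap f)
    fun n w => by simp [pMap_single, pD_single, h]) p

lemma evA1_lsh (A : OP W →ₗ[ℂ] OP W) (p : OP W) : evA1 A (lsh p) = A (evA1 A p) :=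
  LinearMap.congr_fun (Finsupp.lhom_ext (φ := (evA1 A) ∘ₗ (lsh : OP W →ₗ[ℂ] OP W)) (ψ := A ∘ₗ evA1 A)
    fun n w => by simp [lsh_single, evA1_single, pow_succ', Module.End.mul_apply]) p

lemma pD_lsh (d : W →ₗ[ℂ] W) (p : OP W) : pD d (lsh p) = lsh (pD d p) :=
  LinearMap.congr_fun (Finsupp.lhom_ext (φ := (pD d) ∘ₗ (lsh : OP W →ₗ[ℂ] OP W)) (ψ := (lsh : OP W →ₗ[ℂ] OP W) ∘ₗ pD d)
    fun n w => by simp [lsh_single, pD_single]) p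

lemma commute_nD_pD (d : W →ₗ[ℂ] W) : Commute (nD d) (pD d) := by
  apply LinearMap.ext
  intro p
  simp only [Module.End.mul_apply, nD_apply, map_sub, map_neg, pD_lsh]

lemma evA1_pD_nD (d : W →ₗ[ℂ] W) (p : OP W) :
    evA1 (nD d) (pD d p) = pD d (evA1 (nD d) p) := by
  refine LinearMap.congr_fun (Finsupp.lhom_ext
    (φ := (evA1 (nD d)) ∘ₗ pD d) (ψ := (pD d) ∘ₗ evA1 (nD d)) fun n w => ?_) p
  have h := LinearMap.congr_fun ((commute_nD_pD d).pow_left n) (Finsupp.single (0 : ℕ) w)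
  simp only [Module.End.mul_apply] at h
  simp only [LinearMap.comp_apply, pD_single, evA1_single]
  rw [← pD_single d 0 w, h]

lemma evA1_nD_nD (d : W →ₗ[ℂ] W) (p : OP W) :
    evA1 (nD d) (nD d p) = lsh (evA1 (nD d) p) := by
  rw [nD_apply, map_sub, map_neg, evA1_lsh, evA1_pD_nD, nD_apply]
  abel

lemma evA1_nD_pow (d : W →ₗ[ℂ] W) (k : ℕ) (w : W) :
    evA1 (nD d) ((nD d ^ k) (Finsupp.single 0 w)) = Finsupp.single k w := by
  induction k with
  | zero => simp [evA1_single]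
  | succ k ih => rw [pow_succ', Module.End.mul_apply, evA1_nD_nD, ih, lsh_single]

lemma evA1_invol (d : W →ₗ[ℂ] W) (p : OP W) :
    evA1 (nD d) (evA1 (nD d) p) = p :=
  LinearMap.congr_fun (Finsupp.lhom_ext
    (φ := (evA1 (nD d)) ∘ₗ evA1 (nD d)) (ψ := LinearMap.id) fun k w => by
      simp only [LinearMap.comp_apply, evA1_single, LinearMap.id_apply]
      exact evA1_nD_pow d k w) p

lemma evA1_nD_cancel (d : W →ₗ[ℂ] W) (q : OP W) :
    evA1 (nD d) (lsh q + pD d q) = -lsh (evA1 (nD d) q) := by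
  rw [map_add, evA1_lsh, evA1_pD_nD, nD_apply]
  abel

lemma evA1_nD_neg_lsh (d : W →ₗ[ℂ] W) (q : OP W) :
    evA1 (nD d) (-lsh q) = lsh (evA1 (nD d) q) + pD d (evA1 (nD d) q) := by
  rw [map_neg, evA1_lsh, nD_apply]
  abel

lemma inlP_single (n : ℕ) (a : R) :
    inlP R Q (Finsupp.single n a) = Finsupp.single n ((a, 0) : R × Q) := by
  simp [inlP]

lemma inrP_single (n : ℕ) (x : Q) :
    inrP R Q (Finsupp.single n x) = Finsupp.single n ((0, x) : R × Q) := by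
  simp [inrP]

lemma pMap_fst_inlP (p : OP R) :
    pMap (LinearMap.fst ℂ R Q) (inlP R Q p) = p :=
  LinearMap.congr_fun (Finsupp.lhom_ext
    (φ := (pMap (LinearMap.fst ℂ R Q)) ∘ₗ inlP R Q) (ψ := LinearMap.id)
    fun n w => by simp [inlP_single, pMap_single]) p

lemma pMap_fst_inrP (p : OP Q) :
    pMap (LinearMap.fst ℂ R Q) (inrP R Q p) = 0 :=
  LinearMap.congr_fun (Finsupp.lhom_ext
    (φ := (pMap (LinearMap.fst ℂ R Q)) ∘ₗ inrP R Q) (ψ := 0)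
    fun n w => by simp [inrP_single, pMap_single]) p

lemma pMap_snd_inlP (p : OP R) :
    pMap (LinearMap.snd ℂ R Q) (inlP R Q p) = 0 :=
  LinearMap.congr_fun (Finsupp.lhom_ext
    (φ := (pMap (LinearMap.snd ℂ R Q)) ∘ₗ inlP R Q) (ψ := 0)
    fun n w => by simp [inlP_single, pMap_single]) p

lemma pMap_snd_inrP (p : OP Q) :
    pMap (LinearMap.snd ℂ R Q) (inrP R Q p) = p :=
  LinearMap.congr_fun (Finsupp.lhom_ext
    (φ := (pMap (LinearMap.snd ℂ R Q)) ∘ₗ inrP R Q) (ψ := LinearMap.id)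
    fun n w => by simp [inrP_single, pMap_single]) p

lemma inl_add_inr (p : OP (R × Q)) :
    inlP R Q (pMap (LinearMap.fst ℂ R Q) p) + inrP R Q (pMap (LinearMap.snd ℂ R Q) p) = p :=
  LinearMap.congr_fun (Finsupp.lhom_ext
    (φ := (inlP R Q) ∘ₗ pMap (LinearMap.fst ℂ R Q) + (inrP R Q) ∘ₗ pMap (LinearMap.snd ℂ R Q))
    (ψ := LinearMap.id)
    fun n w => by
      simp only [LinearMap.add_apply, LinearMap.comp_apply, pMap_single, inlP_single,
        inrP_single, LinearMap.fst_apply, LinearMap.snd_apply, LinearMap.id_apply,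
        ← Finsupp.single_add, Prod.mk_add_mk, add_zero, zero_add]) p

lemma OP_prod_ext {p q : OP (R × Q)}
    (h1 : pMap (LinearMap.fst ℂ R Q) p = pMap (LinearMap.fst ℂ R Q) q)
    (h2 : pMap (LinearMap.snd ℂ R Q) p = pMap (LinearMap.snd ℂ R Q) q) : p = q := by
  calc p = inlP R Q (pMap (LinearMap.fst ℂ R Q) p)
        + inrP R Q (pMap (LinearMap.snd ℂ R Q) p) := (inl_add_inr p).symm
    _ = inlP R Q (pMap (LinearMap.fst ℂ R Q) q)
        + inrP R Q (pMap (LinearMap.snd ℂ R Q) q) := by rw [h1, h2]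
    _ = q := inl_add_inr q

end Classify


section Classify2

variable {R Q : Type*}
variable [AddCommGroup R] [Module ℂ R] [AddCommGroup Q] [Module ℂ Q]
variable (dR : R →ₗ[ℂ] R) (dQ : Q →ₗ[ℂ] Q) (m : R →ₗ[ℂ] R →ₗ[ℂ] OP R)

/-- The map `(a, x) ↦ (a + u x, x)`. -/
def Tmap (u : Q →ₗ[ℂ] R) : (R × Q) →ₗ[ℂ] (R × Q) :=
  (LinearMap.fst ℂ R Q + u ∘ₗ LinearMap.snd ℂ R Q).prod (LinearMap.snd ℂ R Q)

lemma Tmap_apply (u : Q →ₗ[ℂ] R) (a : R) (x : Q) : Tmap u (a, x) = (a + u x, x) := rfl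

/-- The equivalence `(a, x) ↦ (a + u x, x)`. -/
def Tequiv (u : Q →ₗ[ℂ] R) : (R × Q) ≃ₗ[ℂ] (R × Q) :=
  LinearEquiv.ofLinear (Tmap u) (Tmap (-u))
    (LinearMap.ext fun e => by
      obtain ⟨a, x⟩ := e
      simp only [LinearMap.comp_apply, Tmap_apply, LinearMap.neg_apply, LinearMap.id_apply]
      rw [Prod.ext_iff]
      constructor
      · simp only [Prod.fst]; abel
      · rfl)
    (LinearMap.ext fun e => by
      obtain ⟨a, x⟩ := e
      simp only [LinearMap.comp_apply, Tmap_apply, LinearMap.neg_apply, LinearMap.id_apply]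
      rw [Prod.ext_iff]
      constructor
      · simp only [Prod.fst]; abel
      · rfl)

lemma Tequiv_apply (u : Q →ₗ[ℂ] R) (a : R) (x : Q) : Tequiv u (a, x) = (a + u x, x) := rfl

lemma Tequiv_coe (u : Q →ₗ[ℂ] R) : (Tequiv u : (R × Q) →ₗ[ℂ] (R × Q)) = Tmap u := rfl

lemma Tequiv_stab (u : Q →ₗ[ℂ] R) : Stab (Tequiv u) := fun a => by
  rw [Tequiv_apply]; simp

lemma Tequiv_costab (u : Q →ₗ[ℂ] R) : Costab (Tequiv u) := fun e => by
  obtain ⟨a, x⟩ := e; rfl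

lemma prjR_pMap_Tmap (u : Q →ₗ[ℂ] R) (p : OP (R × Q)) :
    pMap (LinearMap.fst ℂ R Q) (pMap (Tmap u) p)
      = pMap (LinearMap.fst ℂ R Q) p + pMap u (pMap (LinearMap.snd ℂ R Q) p) := by
  rw [pMap_comp]
  have h : LinearMap.fst ℂ R Q ∘ₗ Tmap u
      = LinearMap.fst ℂ R Q + u ∘ₗ LinearMap.snd ℂ R Q := LinearMap.ext fun e => rfl
  rw [h, pMap_add, ← pMap_comp]

lemma prjQ_pMap_Tmap (u : Q →ₗ[ℂ] R) (p : OP (R × Q)) :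
    pMap (LinearMap.snd ℂ R Q) (pMap (Tmap u) p) = pMap (LinearMap.snd ℂ R Q) p := by
  rw [pMap_comp]
  have h : LinearMap.snd ℂ R Q ∘ₗ Tmap u = LinearMap.snd ℂ R Q := LinearMap.ext fun e => rfl
  rw [h]

/-- Extraction of an extending datum from a conformal-bilinear product on `R ⊕ Q`. -/
def extract (S : (R × Q) →ₗ[ℂ] (R × Q) →ₗ[ℂ] OP (R × Q))
    (hc : ConfBilin (dR.prodMap dQ) (dR.prodMap dQ) (dR.prodMap dQ) S) :
    ExtDatum dR dQ where
  phi := (S.compl₁₂ (LinearMap.inr ℂ R Q) (LinearMap.inl ℂ R Q)).compr₂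
    (pMap (LinearMap.fst ℂ R Q))
  psi := ((S.compl₁₂ (LinearMap.inl ℂ R Q) (LinearMap.inr ℂ R Q)).compr₂
    (evA1 (nD dR) ∘ₗ pMap (LinearMap.fst ℂ R Q))).flip
  l := (S.compl₁₂ (LinearMap.inl ℂ R Q) (LinearMap.inr ℂ R Q)).compr₂
    (pMap (LinearMap.snd ℂ R Q))
  r := ((S.compl₁₂ (LinearMap.inr ℂ R Q) (LinearMap.inl ℂ R Q)).compr₂
    (evA1 (nD dQ) ∘ₗ pMap (LinearMap.snd ℂ R Q))).flip
  g := (S.compl₁₂ (LinearMap.inr ℂ R Q) (LinearMap.inr ℂ R Q)).compr₂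
    (pMap (LinearMap.fst ℂ R Q))
  o := (S.compl₁₂ (LinearMap.inr ℂ R Q) (LinearMap.inr ℂ R Q)).compr₂
    (pMap (LinearMap.snd ℂ R Q))
  hphi := by
    constructor
    · intro x b
      simp only [LinearMap.compr₂_apply, LinearMap.compl₁₂_apply, LinearMap.inr_apply,
        LinearMap.inl_apply]
      have h0 : (((0 : R), dQ x) : R × Q) = (dR.prodMap dQ) (0, x) := by simp
      rw [h0, hc.dleft, map_neg, pMap_lsh]
    · intro x b
      simp only [LinearMap.compr₂_apply, LinearMap.compl₁₂_apply, LinearMap.inr_apply,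
        LinearMap.inl_apply]
      have h0 : ((dR b, (0 : Q)) : R × Q) = (dR.prodMap dQ) (b, 0) := by simp
      rw [h0, hc.dright, map_add, pMap_lsh,
        pMap_pD (LinearMap.fst ℂ R Q) (dR.prodMap dQ) dR (fun e => by simp)]
  hpsi := by
    constructor
    · intro y a
      simp only [LinearMap.flip_apply, LinearMap.compr₂_apply, LinearMap.compl₁₂_apply,
        LinearMap.inr_apply, LinearMap.inl_apply, LinearMap.comp_apply]
      have h0 : (((0 : R), dQ y) : R × Q) = (dR.prodMap dQ) (0, y) := by simp
      rw [h0, hc.dright, map_add, pMap_lsh,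
        pMap_pD (LinearMap.fst ℂ R Q) (dR.prodMap dQ) dR (fun e => by simp),
        evA1_nD_cancel]
    · intro y a
      simp only [LinearMap.flip_apply, LinearMap.compr₂_apply, LinearMap.compl₁₂_apply,
        LinearMap.inr_apply, LinearMap.inl_apply, LinearMap.comp_apply]
      have h0 : ((dR a, (0 : Q)) : R × Q) = (dR.prodMap dQ) (a, 0) := by simp
      rw [h0, hc.dleft, map_neg, pMap_lsh, evA1_nD_neg_lsh]
  hl := by
    constructor
    · intro a y
      simp only [LinearMap.compr₂_apply, LinearMap.compl₁₂_apply, LinearMap.inr_apply,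
        LinearMap.inl_apply]
      have h0 : ((dR a, (0 : Q)) : R × Q) = (dR.prodMap dQ) (a, 0) := by simp
      rw [h0, hc.dleft, map_neg, pMap_lsh]
    · intro a y
      simp only [LinearMap.compr₂_apply, LinearMap.compl₁₂_apply, LinearMap.inr_apply,
        LinearMap.inl_apply]
      have h0 : (((0 : R), dQ y) : R × Q) = (dR.prodMap dQ) (0, y) := by simp
      rw [h0, hc.dright, map_add, pMap_lsh,
        pMap_pD (LinearMap.snd ℂ R Q) (dR.prodMap dQ) dQ (fun e => by simp)]
  hr := by
    constructor
    · intro a x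
      simp only [LinearMap.flip_apply, LinearMap.compr₂_apply, LinearMap.compl₁₂_apply,
        LinearMap.inr_apply, LinearMap.inl_apply, LinearMap.comp_apply]
      have h0 : ((dR a, (0 : Q)) : R × Q) = (dR.prodMap dQ) (a, 0) := by simp
      rw [h0, hc.dright, map_add, pMap_lsh,
        pMap_pD (LinearMap.snd ℂ R Q) (dR.prodMap dQ) dQ (fun e => by simp),
        evA1_nD_cancel]
    · intro a x
      simp only [LinearMap.flip_apply, LinearMap.compr₂_apply, LinearMap.compl₁₂_apply,
        LinearMap.inr_apply, LinearMap.inl_apply, LinearMap.comp_apply]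
      have h0 : (((0 : R), dQ x) : R × Q) = (dR.prodMap dQ) (0, x) := by simp
      rw [h0, hc.dleft, map_neg, pMap_lsh, evA1_nD_neg_lsh]
  hg := by
    constructor
    · intro x y
      simp only [LinearMap.compr₂_apply, LinearMap.compl₁₂_apply, LinearMap.inr_apply]
      have h0 : (((0 : R), dQ x) : R × Q) = (dR.prodMap dQ) (0, x) := by simp
      rw [h0, hc.dleft, map_neg, pMap_lsh]
    · intro x y
      simp only [LinearMap.compr₂_apply, LinearMap.compl₁₂_apply, LinearMap.inr_apply]
      have h0 : (((0 : R), dQ y) : R × Q) = (dR.prodMap dQ) (0, y) := by simp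
      rw [h0, hc.dright, map_add, pMap_lsh,
        pMap_pD (LinearMap.fst ℂ R Q) (dR.prodMap dQ) dR (fun e => by simp)]
  ho := by
    constructor
    · intro x y
      simp only [LinearMap.compr₂_apply, LinearMap.compl₁₂_apply, LinearMap.inr_apply]
      have h0 : (((0 : R), dQ x) : R × Q) = (dR.prodMap dQ) (0, x) := by simp
      rw [h0, hc.dleft, map_neg, pMap_lsh]
    · intro x y
      simp only [LinearMap.compr₂_apply, LinearMap.compl₁₂_apply, LinearMap.inr_apply]
      have h0 : (((0 : R), dQ y) : R × Q) = (dR.prodMap dQ) (0, y) := by simp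
      rw [h0, hc.dright, map_add, pMap_lsh,
        pMap_pD (LinearMap.snd ℂ R Q) (dR.prodMap dQ) dQ (fun e => by simp)]

lemma uprod_extract (S : (R × Q) →ₗ[ℂ] (R × Q) →ₗ[ℂ] OP (R × Q))
    (hc : ConfBilin (dR.prodMap dQ) (dR.prodMap dQ) (dR.prodMap dQ) S)
    (hres : ∀ a b : R, S (a, 0) (b, 0) = inlP R Q (m a b)) :
    uprod dR dQ (extract dR dQ S hc) m = S := by
  apply LinearMap.ext; intro e₁; apply LinearMap.ext; intro e₂
  obtain ⟨a, x⟩ := e₁; obtain ⟨b, y⟩ := e₂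
  rw [uprod_apply]
  dsimp only
  simp only [extract, LinearMap.compr₂_apply, LinearMap.compl₁₂_apply, LinearMap.flip_apply,
    LinearMap.comp_apply, LinearMap.inl_apply, LinearMap.inr_apply]
  rw [evA1_invol, evA1_invol]
  have hsplit : S (a, x) (b, y)
      = S (a, 0) (b, 0) + S (a, 0) (0, y) + S (0, x) (b, 0) + S (0, x) (0, y) := by
    have h1 : ((a, x) : R × Q) = (a, 0) + (0, x) := by simp
    have h2 : ((b, y) : R × Q) = (b, 0) + (0, y) := by simp
    rw [h1, h2]
    simp only [map_add, LinearMap.add_apply]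
    abel
  rw [hsplit, hres]
  apply OP_prod_ext
  · simp only [map_add, pMap_fst_inlP, pMap_fst_inrP, pMap_snd_inlP, pMap_snd_inrP,
      add_zero, zero_add]
    abel
  · simp only [map_add, pMap_fst_inlP, pMap_fst_inrP, pMap_snd_inlP, pMap_snd_inrP,
      add_zero, zero_add]
    abel

lemma ExtDatum.ext' {Ω Ω' : ExtDatum dR dQ} (h1 : Ω.phi = Ω'.phi) (h2 : Ω.psi = Ω'.psi)
    (h3 : Ω.l = Ω'.l) (h4 : Ω.r = Ω'.r) (h5 : Ω.g = Ω'.g) (h6 : Ω.o = Ω'.o) : Ω = Ω' := by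
  cases Ω; cases Ω'
  dsimp only at h1 h2 h3 h4 h5 h6
  subst h1; subst h2; subst h3; subst h4; subst h5; subst h6
  rfl

lemma extract_uprod (Ω : ExtDatum dR dQ)
    (hc : ConfBilin (dR.prodMap dQ) (dR.prodMap dQ) (dR.prodMap dQ) (uprod dR dQ Ω m)) :
    extract dR dQ (uprod dR dQ Ω m) hc = Ω := by
  apply ExtDatum.ext'
  · apply LinearMap.ext; intro x; apply LinearMap.ext; intro b
    simp only [extract, LinearMap.compr₂_apply, LinearMap.compl₁₂_apply, LinearMap.flip_apply,
      LinearMap.comp_apply, LinearMap.inl_apply, LinearMap.inr_apply]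
    rw [uprod_apply]
    dsimp only
    simp only [map_zero, LinearMap.zero_apply, zero_add, add_zero, map_add,
      pMap_fst_inlP, pMap_fst_inrP, pMap_snd_inlP, pMap_snd_inrP]
  · apply LinearMap.ext; intro y; apply LinearMap.ext; intro a
    simp only [extract, LinearMap.compr₂_apply, LinearMap.compl₁₂_apply, LinearMap.flip_apply,
      LinearMap.comp_apply, LinearMap.inl_apply, LinearMap.inr_apply]
    rw [uprod_apply]
    dsimp only
    simp only [map_zero, LinearMap.zero_apply, zero_add, add_zero, map_add,
      pMap_fst_inlP, pMap_fst_inrP, pMap_snd_inlP, pMap_snd_inrP]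
    rw [evA1_invol]
  · apply LinearMap.ext; intro a; apply LinearMap.ext; intro y
    simp only [extract, LinearMap.compr₂_apply, LinearMap.compl₁₂_apply, LinearMap.flip_apply,
      LinearMap.comp_apply, LinearMap.inl_apply, LinearMap.inr_apply]
    rw [uprod_apply]
    dsimp only
    simp only [map_zero, LinearMap.zero_apply, zero_add, add_zero, map_add,
      pMap_fst_inlP, pMap_fst_inrP, pMap_snd_inlP, pMap_snd_inrP]
  · apply LinearMap.ext; intro b; apply LinearMap.ext; intro x
    simp only [extract, LinearMap.compr₂_apply, LinearMap.compl₁₂_apply, LinearMap.flip_apply,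
      LinearMap.comp_apply, LinearMap.inl_apply, LinearMap.inr_apply]
    rw [uprod_apply]
    dsimp only
    simp only [map_zero, LinearMap.zero_apply, zero_add, add_zero, map_add,
      pMap_fst_inlP, pMap_fst_inrP, pMap_snd_inlP, pMap_snd_inrP]
    rw [evA1_invol]
  · apply LinearMap.ext; intro x; apply LinearMap.ext; intro y
    simp only [extract, LinearMap.compr₂_apply, LinearMap.compl₁₂_apply, LinearMap.flip_apply,
      LinearMap.comp_apply, LinearMap.inl_apply, LinearMap.inr_apply]
    rw [uprod_apply]
    dsimp only
    simp only [map_zero, LinearMap.zero_apply, zero_add, add_zero, map_add,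
      pMap_fst_inlP, pMap_fst_inrP, pMap_snd_inlP, pMap_snd_inrP]
  · apply LinearMap.ext; intro x; apply LinearMap.ext; intro y
    simp only [extract, LinearMap.compr₂_apply, LinearMap.compl₁₂_apply, LinearMap.flip_apply,
      LinearMap.comp_apply, LinearMap.inl_apply, LinearMap.inr_apply]
    rw [uprod_apply]
    dsimp only
    simp only [map_zero, LinearMap.zero_apply, zero_add, add_zero, map_add,
      pMap_fst_inlP, pMap_fst_inrP, pMap_snd_inlP, pMap_snd_inrP]

end Classify2


section Classify3

variable {R Q : Type*}
variable [AddCommGroup R] [Module ℂ R] [AddCommGroup Q] [Module ℂ Q]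
variable (dR : R →ₗ[ℂ] R) (dQ : Q →ₗ[ℂ] Q) (m : R →ₗ[ℂ] R →ₗ[ℂ] OP R)

lemma iso_of_rel (Ω Ω' : ExtDatum dR dQ) (u : Q →ₗ[ℂ] R)
    (hu : ∀ q, u (dQ q) = dR (u q))
    (hrel : DatumRel dR dQ m Ω Ω' u LinearMap.id) :
    IsIsoLSCA (dR.prodMap dQ) (uprod dR dQ Ω m) (uprod dR dQ Ω' m) (Tequiv u) := by
  obtain ⟨h1, h2, h3, h4, h5, h6⟩ := hrel
  simp only [LinearMap.id_coe, id_eq] at h1 h2 h3 h4 h5 h6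
  constructor
  · rintro ⟨a, x⟩
    simp [LinearMap.prodMap_apply, Tequiv_apply, map_add, hu x]
  · rintro ⟨a, x⟩ ⟨b, y⟩
    rw [Tequiv_coe]
    rw [show (⇑(Tequiv u) : R × Q → R × Q) = ⇑(Tmap u) from rfl]
    rw [Tmap_apply, Tmap_apply, uprod_apply, uprod_apply]
    dsimp only
    apply OP_prod_ext
    · rw [prjR_pMap_Tmap]
      simp only [map_add, LinearMap.add_apply, pMap_fst_inlP, pMap_fst_inrP,
        pMap_snd_inlP, pMap_snd_inrP, add_zero, zero_add]
      have e1 : evA1 (nD dR) (Ω'.psi y a)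
          = evA1 (nD dR) (Ω.psi y a) + pMap u (Ω.l a y) - m a (u y) := by
        rw [h1 a y]; abel
      have e3 : Ω'.phi x b
          = Ω.phi x b + pMap u (evA1 (nD dQ) (Ω.r b x)) - m (u x) b := by
        rw [h3 b x]; abel
      have e5 : Ω'.g x y
          = Ω.g x y + pMap u (Ω.o x y) - m (u x) (u y) - Ω'.phi x (u y)
            - evA1 (nD dR) (Ω'.psi y (u x)) := by
        rw [h5 x y]; abel
      rw [e1, e3, e5]
      abel
    · rw [prjQ_pMap_Tmap]
      simp only [map_add, LinearMap.add_apply, pMap_fst_inlP, pMap_fst_inrP,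
        pMap_snd_inlP, pMap_snd_inrP, add_zero, zero_add]
      have e2 := h2 a y
      rw [pMap_id] at e2
      have e4 := h4 b x
      rw [pMap_id] at e4
      have e6 := h6 x y
      rw [pMap_id] at e6
      rw [e2, e4, e6]
      abel

lemma rel_of_iso (Ω Ω' : ExtDatum dR dQ) (T : (R × Q) ≃ₗ[ℂ] (R × Q))
    (hiso : IsIsoLSCA (dR.prodMap dQ) (uprod dR dQ Ω m) (uprod dR dQ Ω' m) T)
    (hst : Stab T) (hco : Costab T) :
    DatumCohom dR dQ m Ω Ω' := by
  set u : Q →ₗ[ℂ] R :=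
    LinearMap.fst ℂ R Q ∘ₗ (T : (R × Q) →ₗ[ℂ] (R × Q)) ∘ₗ LinearMap.inr ℂ R Q with hu_def
  have hTx : ∀ x : Q, T ((0 : R), x) = (u x, x) := fun x => by
    have h2 := hco ((0 : R), x)
    rw [Prod.ext_iff]
    exact ⟨rfl, h2⟩
  have hT : ∀ (a : R) (x : Q), T (a, x) = (a + u x, x) := fun a x => by
    have hsplit : ((a, x) : R × Q) = (a, 0) + (0, x) := by simp
    rw [hsplit, map_add, hst a, hTx x]
    exact Prod.ext_iff.mpr ⟨rfl, zero_add x⟩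
  have hucomm : ∀ q, u (dQ q) = dR (u q) := fun q => by
    have hd := hiso.dcomm ((0 : R), q)
    simp only [LinearMap.prodMap_apply, map_zero, hTx] at hd
    simpa using congrArg Prod.fst hd
  have hTlin : (T : (R × Q) →ₗ[ℂ] (R × Q)) = Tmap u := LinearMap.ext fun e => by
    obtain ⟨a, x⟩ := e
    simp only [LinearEquiv.coe_coe, Tmap_apply]
    exact hT a x
  refine ⟨u, hucomm, ?_, ?_, ?_, ?_, ?_, ?_⟩
  · intro a y
    have hm1 := hiso.mult (a, (0 : Q)) ((0 : R), y)
    rw [hst a, hTx y, hTlin, uprod_apply, uprod_apply] at hm1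
    have hR := congrArg (pMap (LinearMap.fst ℂ R Q)) hm1
    rw [prjR_pMap_Tmap] at hR
    simp only [map_zero, LinearMap.zero_apply, map_add, LinearMap.add_apply,
      pMap_fst_inlP, pMap_fst_inrP, pMap_snd_inlP, pMap_snd_inrP,
      add_zero, zero_add] at hR
    simp only [LinearMap.id_coe, id_eq]
    abel_nf at hR ⊢
    exact hR.symm
  · intro a y
    have hm1 := hiso.mult (a, (0 : Q)) ((0 : R), y)
    rw [hst a, hTx y, hTlin, uprod_apply, uprod_apply] at hm1
    have hQ := congrArg (pMap (LinearMap.snd ℂ R Q)) hm1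
    rw [prjQ_pMap_Tmap] at hQ
    simp only [map_zero, LinearMap.zero_apply, map_add, LinearMap.add_apply,
      pMap_fst_inlP, pMap_fst_inrP, pMap_snd_inlP, pMap_snd_inrP,
      add_zero, zero_add] at hQ
    rw [pMap_id]
    simp only [LinearMap.id_coe, id_eq]
    exact hQ.symm
  · intro b x
    have hm1 := hiso.mult ((0 : R), x) (b, (0 : Q))
    rw [hst b, hTx x, hTlin, uprod_apply, uprod_apply] at hm1
    have hR := congrArg (pMap (LinearMap.fst ℂ R Q)) hm1
    rw [prjR_pMap_Tmap] at hR
    simp only [map_zero, LinearMap.zero_apply, map_add, LinearMap.add_apply,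
      pMap_fst_inlP, pMap_fst_inrP, pMap_snd_inlP, pMap_snd_inrP,
      add_zero, zero_add] at hR
    simp only [LinearMap.id_coe, id_eq]
    abel_nf at hR ⊢
    exact hR.symm
  · intro b x
    have hm1 := hiso.mult ((0 : R), x) (b, (0 : Q))
    rw [hst b, hTx x, hTlin, uprod_apply, uprod_apply] at hm1
    have hQ := congrArg (pMap (LinearMap.snd ℂ R Q)) hm1
    rw [prjQ_pMap_Tmap] at hQ
    simp only [map_zero, LinearMap.zero_apply, map_add, LinearMap.add_apply,
      pMap_fst_inlP, pMap_fst_inrP, pMap_snd_inlP, pMap_snd_inrP,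
      add_zero, zero_add] at hQ
    rw [pMap_id]
    simp only [LinearMap.id_coe, id_eq]
    exact hQ.symm
  · intro x y
    have hm1 := hiso.mult ((0 : R), x) ((0 : R), y)
    rw [hTx x, hTx y, hTlin, uprod_apply, uprod_apply] at hm1
    have hR := congrArg (pMap (LinearMap.fst ℂ R Q)) hm1
    rw [prjR_pMap_Tmap] at hR
    simp only [map_zero, LinearMap.zero_apply, map_add, LinearMap.add_apply,
      pMap_fst_inlP, pMap_fst_inrP, pMap_snd_inlP, pMap_snd_inrP,
      add_zero, zero_add] at hR
    simp only [LinearMap.id_coe, id_eq]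
    abel_nf at hR ⊢
    exact hR.symm
  · intro x y
    have hm1 := hiso.mult ((0 : R), x) ((0 : R), y)
    rw [hTx x, hTx y, hTlin, uprod_apply, uprod_apply] at hm1
    have hQ := congrArg (pMap (LinearMap.snd ℂ R Q)) hm1
    rw [prjQ_pMap_Tmap] at hQ
    simp only [map_zero, LinearMap.zero_apply, map_add, LinearMap.add_apply,
      pMap_fst_inlP, pMap_fst_inrP, pMap_snd_inlP, pMap_snd_inrP,
      add_zero, zero_add] at hQ
    rw [pMap_id]
    simp only [LinearMap.id_coe, id_eq]
    abel_nf at hQ ⊢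
    exact hQ.symm

end Classify3


/-- **Theorem 3.12 (ii).**  The assignment `Ω ↦ (R ♮ Q, ·_λ·)` induces a bijection
`𝓗²(Q,R) = 𝔏(R,Q)/≈  →  CExtd'(E,R)`, where `CExtd'(E,R)` is the set of left-symmetric
conformal algebra structures on `E` containing `R` as a subalgebra, modulo isomorphisms
stabilizing `R` and co-stabilizing `Q`. -/
theorem extending_structures_classify'
    {R Q : Type*} [AddCommGroup R] [Module ℂ R] [AddCommGroup Q] [Module ℂ Q]
    (dR : R →ₗ[ℂ] R) (dQ : Q →ₗ[ℂ] Q)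
    (m : R →ₗ[ℂ] R →ₗ[ℂ] OP R) (hm : IsLSCA dR m) :
    ∃ Φ : Quot (fun Ω Ω' : {Ω : ExtDatum dR dQ //
            IsLSCA (dR.prodMap dQ) (uprod dR dQ Ω m)} =>
          DatumCohom dR dQ m Ω.val Ω'.val) →
        Quot (fun S S' : {mE : (R × Q) →ₗ[ℂ] (R × Q) →ₗ[ℂ] OP (R × Q) //
            IsLSCA (dR.prodMap dQ) mE ∧ ∀ a b : R, mE (a, 0) (b, 0) = inlP R Q (m a b)} =>
          ∃ T : (R × Q) ≃ₗ[ℂ] (R × Q),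
            IsIsoLSCA (dR.prodMap dQ) S.val S'.val T ∧ Stab T ∧ Costab T),
      Function.Bijective Φ ∧
      ∀ Ω : {Ω : ExtDatum dR dQ // IsLSCA (dR.prodMap dQ) (uprod dR dQ Ω m)},
        Φ (Quot.mk _ Ω)
          = Quot.mk _ ⟨uprod dR dQ Ω.val m, Ω.property, uprod_res dR dQ Ω.val m⟩ := by
  have relIff : ∀ (Ω Ω' : {Ω : ExtDatum dR dQ // IsLSCA (dR.prodMap dQ) (uprod dR dQ Ω m)}),
      DatumCohom dR dQ m Ω.val Ω'.val ↔
      ∃ T : (R × Q) ≃ₗ[ℂ] (R × Q),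
        IsIsoLSCA (dR.prodMap dQ) (uprod dR dQ Ω.val m) (uprod dR dQ Ω'.val m) T ∧
          Stab T ∧ Costab T := by
    intro Ω Ω'
    constructor
    · rintro ⟨u, hu, hrel⟩
      exact ⟨Tequiv u, iso_of_rel dR dQ m Ω.val Ω'.val u hu hrel,
        Tequiv_stab u, Tequiv_costab u⟩
    · rintro ⟨T, hiso, hst, hco⟩
      exact rel_of_iso dR dQ m Ω.val Ω'.val T hiso hst hco
  let e : {Ω : ExtDatum dR dQ // IsLSCA (dR.prodMap dQ) (uprod dR dQ Ω m)} ≃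
      {mE : (R × Q) →ₗ[ℂ] (R × Q) →ₗ[ℂ] OP (R × Q) //
        IsLSCA (dR.prodMap dQ) mE ∧ ∀ a b : R, mE (a, 0) (b, 0) = inlP R Q (m a b)} :=
    { toFun := fun Ω => ⟨uprod dR dQ Ω.val m, Ω.property, uprod_res dR dQ Ω.val m⟩
      invFun := fun S => ⟨extract dR dQ S.val S.property.1.conf, by
        rw [uprod_extract dR dQ m S.val S.property.1.conf S.property.2]
        exact S.property.1⟩
      left_inv := fun Ω => Subtype.ext (extract_uprod dR dQ m Ω.val Ω.property.conf)
      right_inv := fun S => Subtype.ext (uprod_extract dR dQ m S.val S.property.1.conf S.property.2) }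
  exact ⟨⇑(Quot.congr e relIff), (Quot.congr e relIff).bijective, fun Ω => rfl⟩
end
end

section
/- Let R be a left-symmetric conformal algebra, Q a ℂ[∂]-module, and Ω(R,Q) = (φ, ψ, l, r, ∘_λ) an extending datum in which g_λ(·,·) is trivial. Then Ω(R,Q) is a left-symmetric conformal extending structure of R by Q if and only if (Q, ∘_λ) is a left-symmetric conformal algebra, R is a Q-bimodule via the actions x_λ a = φ(x)_λ a and a_λ x-action ψ, Q is an R-bimodule via (Q, l, r), and for all a, b ∈ R and x, y ∈ Q: (i) (φ(x)_λ a − ψ(x)_λ a)_{λ+μ} b + φ(r(a)_μ x − l(a)_μ x)_{λ+μ} b = φ(x)_λ(a_μ b) − a_μ(φ(x)_λ b) − ψ(r(b)_{−λ−∂}x)_{−μ−∂} a; (ii) ψ(x)_{−λ−μ−∂}(a_λ b − b_μ a) = a_λ(ψ(x)_{−μ−∂} b) − b_μ(ψ(x)_{−λ−∂} a) + ψ(l(b)_μ x)_{−λ−∂} a − ψ(l(a)_λ x)_{−μ−∂} b; (iii) (l(a)_λ x)∘_{λ+μ} y + l(ψ(x)_{−λ−∂} a)_{λ+μ} y − l(a)_λ(x∘_μ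 y) = l(φ(x)_μ a)_{λ+μ} y + (r(a)_{−μ−∂} x)∘_{λ+μ} y − r(ψ(y)_{−λ−∂} a)_{−μ−∂} x − x∘_μ(l(a)_λ y); (iv) r(a)_{−λ−μ−∂}(x∘_λ y − y∘_μ x) = r(φ(y)_μ a)_{−λ−∂} x − r(φ(x)_λ a)_{−μ−∂} y + x∘_λ(r(a)_{−μ−∂} y) − y∘_μ(r(a)_{−λ−∂} x). -/
open Finsupp Polynomial

noncomputable section

/-- `(V, l, r)` is a bimodule over the left-symmetric conformal algebra `(S, mS)`. -/
structure IsBimodule {S V : Type*} [AddCommGroup S] [Module ℂ S] [AddCommGroup V] [Module ℂ V]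
    (dV : V →ₗ[ℂ] V) (mS : S →ₗ[ℂ] S →ₗ[ℂ] OP S)
    (l r : S →ₗ[ℂ] V →ₗ[ℂ] OP V) : Prop where
  bm1 : ∀ (a b : S) (v : V),
    exL l (LX + LY) (ev2 mS LX a b) v - exR l LX a (ev2 l LY b v)
      = exL l (LX + LY) (ev2 mS LY b a) v - exR l LY b (ev2 l LX a v)
  bm2 : ∀ (a b : S) (v : V),
    exR r (nXY dV) b (ev2 l LX a v) - exR l LX a (ev2 r (nY dV) b v)
      = exR r (nXY dV) b (ev2 r (nY dV) a v) - exL r (nY dV) (ev2 mS LX a b) v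

/-!
Write `D(u, v, w) = (u_λ v)_{λ+μ} w − u_λ(v_μ w) − (v_μ u)_{λ+μ} w + v_μ(u_λ w)` for the
left-symmetry defect of a λ-product. It is additive in each argument, and exchanging `u` and `v`
negates it up to the swap `λ ↔ μ`; so `R ♮ Q` is left-symmetric iff `D` vanishes on triples of
elements of `R` or of `Q`, one triple of each of the six kinds up to exchanging the first two.
With `g = 0`, each such `D` splits into an `R`- and a `Q`-component by expanding the unified
product, and these components are exactly the left-symmetry of `R` and of `Q`, the two identities
of each of the bimodules `(R, φ, ψ)` and `(Q, l, r)`, and (i)–(iv). Conformal sesquilinearity of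
the unified product is inherited from its constituents.
-/

namespace BicrossedProduct

lemma pow_apply_of_semiconj {M N : Type*} [AddCommGroup M] [Module ℂ M] [AddCommGroup N]
    [Module ℂ N] {A : N →ₗ[ℂ] N} {B : M →ₗ[ℂ] M} {T : M →ₗ[ℂ] N}
    (h : ∀ x, A (T x) = T (B x)) (k : ℕ) (x : M) : (A ^ k) (T x) = T ((B ^ k) x) := by
  simp only [Module.End.coe_pow]
  exact (Function.Semiconj.iterate_right (fun x => (h x).symm) k x).symm

lemma eq_zero_iff_of_eq_sub {G : Type*} [AddCommGroup G] {X a b : G} (h : X = a - b) :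
    X = 0 ↔ a = b := by
  rw [h, sub_eq_zero]

section Operators

variable {W W' : Type*} [AddCommGroup W] [Module ℂ W] [AddCommGroup W'] [Module ℂ W']

@[simp] lemma lsh_single (k : ℕ) (w : W) : lsh (single k w) = single (k + 1) w := by
  simp [lsh]

@[simp] lemma pD_single (d : W →ₗ[ℂ] W) (k : ℕ) (w : W) : pD d (single k w) = single k (d w) := by
  simp [pD]

@[simp] lemma LX_single (p : ℕ × ℕ) (w : W) : LX (single p w) = single (p.1 + 1, p.2) w := by
  simp [LX]

@[simp] lemma LY_single (p : ℕ × ℕ) (w : W) : LY (single p w) = single (p.1, p.2 + 1) w := by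
  simp [LY]

@[simp] lemma PD_single (d : W →ₗ[ℂ] W) (p : ℕ × ℕ) (w : W) :
    PD d (single p w) = single p (d w) := by
  simp [PD]

@[simp] lemma evA_single (A : TP W →ₗ[ℂ] TP W) (k : ℕ) (w : W) :
    evA A (single k w) = (A ^ k) (single (0, 0) w) := by
  simp [evA]

@[simp] lemma evA1_single (A : OP W →ₗ[ℂ] OP W) (k : ℕ) (w : W) :
    evA1 A (single k w) = (A ^ k) (single 0 w) := by
  simp [evA1]

lemma lsh_mapRange (f : W →ₗ[ℂ] W') (p : OP W) :
    lsh (mapRange.linearMap f p) = mapRange.linearMap f (lsh p) :=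
  mapDomain_mapRange _ _ _ f.map_zero (map_add f)

lemma LX_mapRange (f : W →ₗ[ℂ] W') (q : TP W) :
    LX (mapRange.linearMap f q) = mapRange.linearMap f (LX q) :=
  mapDomain_mapRange _ _ _ f.map_zero (map_add f)

lemma LY_mapRange (f : W →ₗ[ℂ] W') (q : TP W) :
    LY (mapRange.linearMap f q) = mapRange.linearMap f (LY q) :=
  mapDomain_mapRange _ _ _ f.map_zero (map_add f)

lemma LX_LY (q : TP W) : LX (LY q) = LY (LX q) := by
  simp only [LX, LY, lmapDomain_apply, ← mapDomain_comp]
  rfl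

lemma lsh_pD (d : W →ₗ[ℂ] W) (p : OP W) : lsh (pD d p) = pD d (lsh p) := lsh_mapRange d p

lemma LX_PD (d : W →ₗ[ℂ] W) (q : TP W) : LX (PD d q) = PD d (LX q) := LX_mapRange d q

lemma LY_PD (d : W →ₗ[ℂ] W) (q : TP W) : LY (PD d q) = PD d (LY q) := LY_mapRange d q

lemma evA_lsh (A : TP W →ₗ[ℂ] TP W) (p : OP W) : evA A (lsh p) = A (evA A p) := by
  induction p using Finsupp.induction_linear with
  | zero => simp
  | add p p' hp hp' => simp only [map_add, hp, hp']
  | single k w => simp only [lsh_single, evA_single, pow_succ', Module.End.mul_apply]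

lemma evA_pD {A : TP W →ₗ[ℂ] TP W} {d : W →ₗ[ℂ] W} (hA : ∀ q, A (PD d q) = PD d (A q))
    (p : OP W) : evA A (pD d p) = PD d (evA A p) := by
  induction p using Finsupp.induction_linear with
  | zero => simp
  | add p p' hp hp' => simp only [map_add, hp, hp']
  | single k w =>
    rw [pD_single, evA_single, evA_single, ← pow_apply_of_semiconj hA, PD_single]

lemma evA1_lsh (B : OP W →ₗ[ℂ] OP W) (p : OP W) : evA1 B (lsh p) = B (evA1 B p) := by
  induction p using Finsupp.induction_linear with
  | zero => simp
  | add p p' hp hp' => simp only [map_add, hp, hp']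
  | single k w => simp only [lsh_single, evA1_single, pow_succ', Module.End.mul_apply]

lemma evA1_pD {B : OP W →ₗ[ℂ] OP W} {d : W →ₗ[ℂ] W} (hB : ∀ q, B (pD d q) = pD d (B q))
    (p : OP W) : evA1 B (pD d p) = pD d (evA1 B p) := by
  induction p using Finsupp.induction_linear with
  | zero => simp
  | add p p' hp hp' => simp only [map_add, hp, hp']
  | single k w =>
    rw [pD_single, evA1_single, evA1_single, ← pow_apply_of_semiconj hB, pD_single]

lemma evA_evA1 {A C : TP W →ₗ[ℂ] TP W} {B : OP W →ₗ[ℂ] OP W}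
    (h : ∀ q, evA A (B q) = C (evA A q)) (p : OP W) : evA A (evA1 B p) = evA C p := by
  induction p using Finsupp.induction_linear with
  | zero => simp
  | add p p' hp hp' => simp only [map_add, hp, hp']
  | single k w =>
    rw [evA1_single, evA_single, ← pow_apply_of_semiconj (fun q => (h q).symm), evA_single,
      pow_zero, Module.End.one_apply]

lemma evA_evA1_nD {A C : TP W →ₗ[ℂ] TP W} {d : W →ₗ[ℂ] W}
    (hA : ∀ q, A (PD d q) = PD d (A q)) (hC : ∀ q, C q = -A q - PD d q) (p : OP W) :
    evA A (evA1 (nD d) p) = evA C p :=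
  evA_evA1 (fun q => by
    rw [nD, LinearMap.sub_apply, LinearMap.neg_apply, map_sub, map_neg, evA_lsh, evA_pD hA, hC])
    p

lemma evA_LX_evA1_nD (d : W →ₗ[ℂ] W) (p : OP W) : evA LX (evA1 (nD d) p) = evA (nX d) p :=
  evA_evA1_nD (LX_PD d) (fun _ => rfl) p

lemma evA_LY_evA1_nD (d : W →ₗ[ℂ] W) (p : OP W) : evA LY (evA1 (nD d) p) = evA (nY d) p :=
  evA_evA1_nD (LY_PD d) (fun _ => rfl) p

lemma evA_LX_add_LY_evA1_nD (d : W →ₗ[ℂ] W) (p : OP W) :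
    evA (LX + LY) (evA1 (nD d) p) = evA (nXY d) p :=
  evA_evA1_nD (fun q => by simp only [LinearMap.add_apply, map_add, LX_PD, LY_PD])
    (fun q => by
      simp only [nXY, LinearMap.sub_apply, LinearMap.neg_apply, LinearMap.add_apply]
      abel) p

lemma map_evA {A : TP W →ₗ[ℂ] TP W} {B : TP W' →ₗ[ℂ] TP W'} {Φ : TP W →ₗ[ℂ] TP W'}
    {f : W →ₗ[ℂ] W'} (hΦ : ∀ q, Φ (A q) = B (Φ q))
    (h₀ : ∀ w, Φ (single (0, 0) w) = single (0, 0) (f w)) (p : OP W) :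
    Φ (evA A p) = evA B (pMap f p) := by
  induction p using Finsupp.induction_linear with
  | zero => simp
  | add p p' hp hp' => simp only [map_add, hp, hp']
  | single k w =>
    rw [evA_single, ← pow_apply_of_semiconj (fun q => (hΦ q).symm), h₀, pMap,
      mapRange.linearMap_apply, mapRange_single, evA_single]

lemma map_evA_eq_map_evA {N : Type*} [AddCommGroup N] [Module ℂ N] {Φ : TP W →ₗ[ℂ] N}
    {B B' : TP W →ₗ[ℂ] TP W} {C : N →ₗ[ℂ] N} (hB : ∀ q, Φ (B q) = C (Φ q))
    (hB' : ∀ q, Φ (B' q) = C (Φ q)) (p : OP W) : Φ (evA B p) = Φ (evA B' p) := by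
  induction p using Finsupp.induction_linear with
  | zero => simp
  | add p p' hp hp' => simp only [map_add, hp, hp']
  | single k w =>
    rw [evA_single, evA_single, ← pow_apply_of_semiconj (fun q => (hB q).symm),
      ← pow_apply_of_semiconj (fun q => (hB' q).symm)]

end Operators

section Lift

variable {U V W U' V' : Type*} [AddCommGroup U] [Module ℂ U] [AddCommGroup V] [Module ℂ V]
  [AddCommGroup W] [Module ℂ W] [AddCommGroup U'] [Module ℂ U'] [AddCommGroup V'] [Module ℂ V']

def liftTP (F : U →ₗ[ℂ] TP W) : TP U →ₗ[ℂ] TP W :=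
  Finsupp.lsum ℂ fun ij => (LX ^ ij.1) ∘ₗ (LY ^ ij.2) ∘ₗ F

@[simp] lemma liftTP_single (F : U →ₗ[ℂ] TP W) (p : ℕ × ℕ) (u : U) :
    liftTP F (single p u) = (LX ^ p.1) ((LY ^ p.2) (F u)) := by
  simp [liftTP]

@[simp] lemma liftTP_zero : liftTP (0 : U →ₗ[ℂ] TP W) = 0 := by
  ext; simp [liftTP]

lemma liftTP_add (F G : U →ₗ[ℂ] TP W) (P : TP U) :
    liftTP (F + G) P = liftTP F P + liftTP G P := by
  induction P using Finsupp.induction_linear with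
  | zero => simp
  | add P P' hP hP' => simp only [map_add, hP, hP']; abel
  | single p u => simp only [liftTP_single, LinearMap.add_apply, map_add]

lemma exL_eq_liftTP (n : U →ₗ[ℂ] V →ₗ[ℂ] OP W) (A : TP W →ₗ[ℂ] TP W) (P : TP U) (v : V) :
    exL n A P v = liftTP (evA A ∘ₗ n.flip v) P :=
  rfl

lemma exR_eq_liftTP (n : U →ₗ[ℂ] V →ₗ[ℂ] OP W) (A : TP W →ₗ[ℂ] TP W) (u : U) (P : TP V) :
    exR n A u P = liftTP (evA A ∘ₗ n u) P :=
  rfl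

lemma liftTP_LX (F : U →ₗ[ℂ] TP W) (P : TP U) : liftTP F (LX P) = LX (liftTP F P) := by
  induction P using Finsupp.induction_linear with
  | zero => simp
  | add P P' hP hP' => simp only [map_add, hP, hP']
  | single p u => simp only [LX_single, liftTP_single, pow_succ', Module.End.mul_apply]

lemma liftTP_LY (F : U →ₗ[ℂ] TP W) (P : TP U) : liftTP F (LY P) = LY (liftTP F P) := by
  induction P using Finsupp.induction_linear with
  | zero => simp
  | add P P' hP hP' => simp only [map_add, hP, hP']
  | single p u =>
    simp only [LY_single, liftTP_single, pow_succ', Module.End.mul_apply]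
    exact pow_apply_of_semiconj LX_LY _ _

lemma liftTP_PD {F : U →ₗ[ℂ] TP W} {d : U →ₗ[ℂ] U} {C : TP W →ₗ[ℂ] TP W}
    (hCX : ∀ q, C (LX q) = LX (C q)) (hCY : ∀ q, C (LY q) = LY (C q))
    (hF : ∀ u, F (d u) = -C (F u)) (P : TP U) : liftTP F (PD d P) = -C (liftTP F P) := by
  induction P using Finsupp.induction_linear with
  | zero => simp
  | add P P' hP hP' => simp only [map_add, hP, hP', neg_add]
  | single p u =>
    rw [PD_single, liftTP_single, liftTP_single, hF, map_neg, map_neg,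
      pow_apply_of_semiconj (fun q => (hCY q).symm),
      pow_apply_of_semiconj (fun q => (hCX q).symm)]

lemma liftTP_evA_PD (n : U →ₗ[ℂ] V →ₗ[ℂ] OP W) {d : U →ₗ[ℂ] U}
    (hn : ∀ u v, n (d u) v = -lsh (n u v)) (v : V) (P : TP U) :
    liftTP (evA (LX + LY) ∘ₗ n.flip v) (PD d P)
      = -LX (liftTP (evA (LX + LY) ∘ₗ n.flip v) P) - LY (liftTP (evA (LX + LY) ∘ₗ n.flip v) P) := by
  rw [liftTP_PD (C := LX + LY)
    (fun q => by simp only [LinearMap.add_apply, map_add, LX_LY])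
    (fun q => by simp only [LinearMap.add_apply, map_add, LX_LY])
    (fun u => by simp only [LinearMap.comp_apply, LinearMap.flip_apply, hn, map_neg, evA_lsh])]
  simp only [LinearMap.add_apply]
  abel

/-- Sesquilinearity in the first argument turns the `∂` of `−μ−∂` into `−λ−μ`: the inner
substitution `−μ−∂` in `(u_{−μ−∂} v)_{λ+μ} w` may be replaced by `λ`. -/
lemma exL_ev2_nY (n : U →ₗ[ℂ] V →ₗ[ℂ] OP W) {d : U →ₗ[ℂ] U}
    (hn : ∀ u v, n (d u) v = -lsh (n u v)) (n' : U' →ₗ[ℂ] V' →ₗ[ℂ] OP U) (u' : U') (v' : V')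
    (v : V) : exL n (LX + LY) (ev2 n' (nY d) u' v') v = exL n (LX + LY) (ev2 n' LX u' v') v := by
  simp only [exL_eq_liftTP, ev2]
  refine map_evA_eq_map_evA (C := LX) (fun P => ?_) (liftTP_LX _) _
  rw [nY, LinearMap.sub_apply, LinearMap.neg_apply, map_sub, map_neg, liftTP_LY,
    liftTP_evA_PD n hn]
  abel

lemma exL_ev2_nX (n : U →ₗ[ℂ] V →ₗ[ℂ] OP W) {d : U →ₗ[ℂ] U}
    (hn : ∀ u v, n (d u) v = -lsh (n u v)) (n' : U' →ₗ[ℂ] V' →ₗ[ℂ] OP U) (u' : U') (v' : V')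
    (v : V) : exL n (LX + LY) (ev2 n' (nX d) u' v') v = exL n (LX + LY) (ev2 n' LY u' v') v := by
  simp only [exL_eq_liftTP, ev2]
  refine map_evA_eq_map_evA (C := LY) (fun P => ?_) (liftTP_LY _) _
  rw [nX, LinearMap.sub_apply, LinearMap.neg_apply, map_sub, map_neg, liftTP_LX,
    liftTP_evA_PD n hn]
  abel

variable (n : U →ₗ[ℂ] V →ₗ[ℂ] OP W) (A : TP W →ₗ[ℂ] TP W)

lemma ev2_add_left (u u' : U) (v : V) : ev2 n A (u + u') v = ev2 n A u v + ev2 n A u' v := by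
  simp only [ev2, map_add, LinearMap.add_apply]

lemma ev2_add_right (u : U) (v v' : V) : ev2 n A u (v + v') = ev2 n A u v + ev2 n A u v' := by
  simp only [ev2, map_add]

lemma exL_add_left (P P' : TP U) (v : V) : exL n A (P + P') v = exL n A P v + exL n A P' v := by
  simp only [exL_eq_liftTP, map_add]

lemma exL_sub_left (P P' : TP U) (v : V) : exL n A (P - P') v = exL n A P v - exL n A P' v := by
  simp only [exL_eq_liftTP, map_sub]

lemma exL_add_right (P : TP U) (v v' : V) : exL n A P (v + v') = exL n A P v + exL n A P v' := by
  simp only [exL_eq_liftTP, map_add, LinearMap.comp_add, liftTP_add]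

lemma exR_add_left (u u' : U) (P : TP V) : exR n A (u + u') P = exR n A u P + exR n A u' P := by
  simp only [exR_eq_liftTP, map_add, LinearMap.comp_add, liftTP_add]

lemma exR_add_right (u : U) (P P' : TP V) : exR n A u (P + P') = exR n A u P + exR n A u P' := by
  simp only [exR_eq_liftTP, map_add]

lemma exR_sub_right (u : U) (P P' : TP V) : exR n A u (P - P') = exR n A u P - exR n A u P' := by
  simp only [exR_eq_liftTP, map_sub]

end Lift

section Swap

variable {U V W : Type*} [AddCommGroup U] [Module ℂ U] [AddCommGroup V] [Module ℂ V]
  [AddCommGroup W] [Module ℂ W]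

def swapXY : TP W →ₗ[ℂ] TP W := Finsupp.lmapDomain W ℂ Prod.swap

@[simp] lemma swapXY_single (p : ℕ × ℕ) (w : W) : swapXY (single p w) = single p.swap w := by
  simp [swapXY]

@[simp] lemma swapXY_swapXY (q : TP W) : swapXY (swapXY q) = q := by
  simp only [swapXY, lmapDomain_apply, ← mapDomain_comp, Prod.swap_swap_eq, mapDomain_id]

lemma swapXY_LX (q : TP W) : swapXY (LX q) = LY (swapXY q) := by
  simp only [swapXY, LX, LY, lmapDomain_apply, ← mapDomain_comp]
  rfl

lemma swapXY_LY (q : TP W) : swapXY (LY q) = LX (swapXY q) := by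
  simp only [swapXY, LX, LY, lmapDomain_apply, ← mapDomain_comp]
  rfl

lemma swapXY_LX_add_LY (q : TP W) :
    swapXY ((LX + LY : TP W →ₗ[ℂ] TP W) q) = (LX + LY : TP W →ₗ[ℂ] TP W) (swapXY q) := by
  simp only [LinearMap.add_apply, map_add, swapXY_LX, swapXY_LY, add_comm]

lemma swapXY_evA {A A' : TP W →ₗ[ℂ] TP W} (hA : ∀ q, swapXY (A q) = A' (swapXY q)) (p : OP W) :
    swapXY (evA A p) = evA A' p := by
  rw [map_evA (f := LinearMap.id) hA (fun w => by simp), pMap, mapRange.linearMap_id,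
    LinearMap.id_apply]

lemma swapXY_ev2_LX (n : U →ₗ[ℂ] V →ₗ[ℂ] OP W) (u : U) (v : V) :
    swapXY (ev2 n LX u v) = ev2 n LY u v :=
  swapXY_evA swapXY_LX _

lemma swapXY_ev2_LY (n : U →ₗ[ℂ] V →ₗ[ℂ] OP W) (u : U) (v : V) :
    swapXY (ev2 n LY u v) = ev2 n LX u v :=
  swapXY_evA swapXY_LY _

lemma swapXY_liftTP (F : U →ₗ[ℂ] TP W) (P : TP U) :
    swapXY (liftTP F P) = liftTP (swapXY ∘ₗ F) (swapXY P) := by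
  induction P using Finsupp.induction_linear with
  | zero => simp
  | add P P' hP hP' => simp only [map_add, hP, hP']
  | single p u =>
    rw [liftTP_single, swapXY_single, liftTP_single, LinearMap.comp_apply,
      ← pow_apply_of_semiconj (fun q => (swapXY_LX q).symm),
      ← pow_apply_of_semiconj (fun q => (swapXY_LY q).symm)]
    exact pow_apply_of_semiconj (fun q => (pow_apply_of_semiconj LX_LY _ q).symm) _ _

lemma swapXY_exL (n : U →ₗ[ℂ] V →ₗ[ℂ] OP W) {A A' : TP W →ₗ[ℂ] TP W}
    (hA : ∀ q, swapXY (A q) = A' (swapXY q)) (P : TP U) (v : V) :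
    swapXY (exL n A P v) = exL n A' (swapXY P) v := by
  rw [exL_eq_liftTP, swapXY_liftTP, exL_eq_liftTP]
  exact congrArg (liftTP · _) (LinearMap.ext fun u => swapXY_evA hA _)

lemma swapXY_exR (n : U →ₗ[ℂ] V →ₗ[ℂ] OP W) {A A' : TP W →ₗ[ℂ] TP W}
    (hA : ∀ q, swapXY (A q) = A' (swapXY q)) (u : U) (P : TP V) :
    swapXY (exR n A u P) = exR n A' u (swapXY P) := by
  rw [exR_eq_liftTP, swapXY_liftTP, exR_eq_liftTP]
  exact congrArg (liftTP · _) (LinearMap.ext fun v => swapXY_evA hA _)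

end Swap

section Defect

variable {L : Type*} [AddCommGroup L] [Module ℂ L]

/-- `(a_λ b)_{λ+μ} c − a_λ(b_μ c) − ((b_μ a)_{λ+μ} c − b_μ(a_λ c))`. -/
def lsDefect (M : L →ₗ[ℂ] L →ₗ[ℂ] OP L) (a b c : L) : TP L :=
  (exL M (LX + LY) (ev2 M LX a b) c - exR M LX a (ev2 M LY b c))
    - (exL M (LX + LY) (ev2 M LY b a) c - exR M LY b (ev2 M LX a c))

lemma isLSCA_iff (d : L →ₗ[ℂ] L) (M : L →ₗ[ℂ] L →ₗ[ℂ] OP L) :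
    IsLSCA d M ↔ ConfBilin d d d M ∧ ∀ a b c, lsDefect M a b c = 0 := by
  simp only [lsDefect, sub_eq_zero]
  exact ⟨fun h => ⟨h.conf, h.lsym⟩, fun h => ⟨h.1, h.2⟩⟩

variable (M : L →ₗ[ℂ] L →ₗ[ℂ] OP L)

lemma lsDefect_add_left (a a' b c : L) :
    lsDefect M (a + a') b c = lsDefect M a b c + lsDefect M a' b c := by
  simp only [lsDefect, ev2_add_left, ev2_add_right, exL_add_left, exR_add_left, exR_add_right]
  abel

lemma lsDefect_add_middle (a b b' c : L) :
    lsDefect M a (b + b') c = lsDefect M a b c + lsDefect M a b' c := by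
  simp only [lsDefect, ev2_add_left, ev2_add_right, exL_add_left, exR_add_left, exR_add_right]
  abel

lemma lsDefect_add_right (a b c c' : L) :
    lsDefect M a b (c + c') = lsDefect M a b c + lsDefect M a b c' := by
  simp only [lsDefect, ev2_add_right, exL_add_right, exR_add_right]
  abel

lemma lsDefect_swap (a b c : L) : lsDefect M b a c = -swapXY (lsDefect M a b c) := by
  simp only [lsDefect, map_sub, swapXY_exL M swapXY_LX_add_LY, swapXY_exR M swapXY_LX,
    swapXY_exR M swapXY_LY, swapXY_ev2_LX, swapXY_ev2_LY]
  abel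

end Defect

lemma forall_lsDefect_prod_eq_zero_iff {R Q : Type*} [AddCommGroup R] [Module ℂ R]
    [AddCommGroup Q] [Module ℂ Q] (M : R × Q →ₗ[ℂ] R × Q →ₗ[ℂ] OP (R × Q)) :
    (∀ e₁ e₂ e₃, lsDefect M e₁ e₂ e₃ = 0) ↔
      (∀ a b c : R, lsDefect M (a, 0) (b, 0) (c, 0) = 0) ∧
      (∀ (a b : R) (z : Q), lsDefect M (a, 0) (b, 0) (0, z) = 0) ∧
      (∀ (a b : R) (x : Q), lsDefect M (0, x) (a, 0) (b, 0) = 0) ∧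
      (∀ (a : R) (x y : Q), lsDefect M (a, 0) (0, x) (0, y) = 0) ∧
      (∀ (a : R) (x y : Q), lsDefect M (0, x) (0, y) (a, 0) = 0) ∧
      (∀ x y z : Q, lsDefect M (0, x) (0, y) (0, z) = 0) := by
  refine ⟨fun h => ⟨fun _ _ _ => h _ _ _, fun _ _ _ => h _ _ _, fun _ _ _ => h _ _ _,
    fun _ _ _ => h _ _ _, fun _ _ _ => h _ _ _, fun _ _ _ => h _ _ _⟩, ?_⟩
  rintro ⟨hRRR, hRRQ, hQRR, hRQQ, hQQR, hQQQ⟩ ⟨a₁, x₁⟩ ⟨a₂, x₂⟩ ⟨a₃, x₃⟩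
  have hRQR : ∀ (a b : R) (x : Q), lsDefect M (a, 0) (0, x) (b, 0) = 0 := fun a b x => by
    rw [lsDefect_swap, hQRR, map_zero, neg_zero]
  have hQRQ : ∀ (a : R) (x y : Q), lsDefect M (0, x) (a, 0) (0, y) = 0 := fun a x y => by
    rw [lsDefect_swap, hRQQ, map_zero, neg_zero]
  have split : ∀ (a : R) (x : Q), ((a, x) : R × Q) = (a, 0) + (0, x) := fun a x => by simp
  rw [split a₁, split a₂, split a₃]
  simp only [lsDefect_add_left, lsDefect_add_middle, lsDefect_add_right,
    hRRR, hRRQ, hQRR, hRQQ, hQQR, hQQQ, hRQR, hQRQ, add_zero]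

section Embedding

variable {R Q : Type*} [AddCommGroup R] [Module ℂ R] [AddCommGroup Q] [Module ℂ Q]

def inlTP : TP R →ₗ[ℂ] TP (R × Q) := mapRange.linearMap (LinearMap.inl ℂ R Q)

def inrTP : TP Q →ₗ[ℂ] TP (R × Q) := mapRange.linearMap (LinearMap.inr ℂ R Q)

def fstTP : TP (R × Q) →ₗ[ℂ] TP R := mapRange.linearMap (LinearMap.fst ℂ R Q)

def sndTP : TP (R × Q) →ₗ[ℂ] TP Q := mapRange.linearMap (LinearMap.snd ℂ R Q)

@[simp] lemma inlTP_single (p : ℕ × ℕ) (a : R) :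
    (inlTP (single p a) : TP (R × Q)) = single p (a, 0) := by
  simp [inlTP]

@[simp] lemma inrTP_single (p : ℕ × ℕ) (x : Q) :
    (inrTP (single p x) : TP (R × Q)) = single p (0, x) := by
  simp [inrTP]

@[simp] lemma fstTP_inlTP (P : TP R) : fstTP (inlTP P : TP (R × Q)) = P := by
  ext; simp [fstTP, inlTP]

@[simp] lemma fstTP_inrTP (P : TP Q) : fstTP (inrTP P : TP (R × Q)) = 0 := by
  ext; simp [fstTP, inrTP]

@[simp] lemma sndTP_inlTP (P : TP R) : sndTP (inlTP P : TP (R × Q)) = 0 := by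
  ext; simp [sndTP, inlTP]

@[simp] lemma sndTP_inrTP (P : TP Q) : sndTP (inrTP P : TP (R × Q)) = P := by
  ext; simp [sndTP, inrTP]

lemma eq_zero_iff_fstTP_sndTP (P : TP (R × Q)) : P = 0 ↔ fstTP P = 0 ∧ sndTP P = 0 := by
  simp [Finsupp.ext_iff, fstTP, sndTP, Prod.ext_iff, forall_and]

lemma inrTP_eq_zero_iff (P : TP Q) : (inrTP P : TP (R × Q)) = 0 ↔ P = 0 := by
  simp [eq_zero_iff_fstTP_sndTP (inrTP P)]

lemma fstTP_swapXY (P : TP (R × Q)) : fstTP (swapXY P) = swapXY (fstTP P) :=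
  (mapDomain_mapRange _ _ _ (LinearMap.fst ℂ R Q).map_zero (map_add _)).symm

lemma sndTP_swapXY (P : TP (R × Q)) : sndTP (swapXY P) = swapXY (sndTP P) :=
  (mapDomain_mapRange _ _ _ (LinearMap.snd ℂ R Q).map_zero (map_add _)).symm

lemma swapXY_eq_zero_iff {W : Type*} [AddCommGroup W] [Module ℂ W] (P : TP W) :
    swapXY P = 0 ↔ P = 0 :=
  ⟨fun h => by rw [← swapXY_swapXY P, h, map_zero], fun h => by rw [h, map_zero]⟩

lemma LX_inlTP (P : TP R) : LX (inlTP P : TP (R × Q)) = inlTP (LX P) := LX_mapRange _ P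

lemma LY_inlTP (P : TP R) : LY (inlTP P : TP (R × Q)) = inlTP (LY P) := LY_mapRange _ P

lemma LX_inrTP (P : TP Q) : LX (inrTP P : TP (R × Q)) = inrTP (LX P) := LX_mapRange _ P

lemma LY_inrTP (P : TP Q) : LY (inrTP P : TP (R × Q)) = inrTP (LY P) := LY_mapRange _ P

lemma liftTP_inlTP {F : R × Q →ₗ[ℂ] TP (R × Q)} {G : R →ₗ[ℂ] TP R} {G' : R →ₗ[ℂ] TP Q}
    (h : ∀ a, F (a, 0) = inlTP (G a) + inrTP (G' a)) (S : TP R) :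
    liftTP F (inlTP S) = inlTP (liftTP G S) + inrTP (liftTP G' S) := by
  induction S using Finsupp.induction_linear with
  | zero => simp
  | add S S' hS hS' => simp only [map_add, hS, hS']; abel
  | single p a =>
    rw [inlTP_single, liftTP_single,
      liftTP_single, liftTP_single, h, map_add, map_add, pow_apply_of_semiconj LY_inlTP,
      pow_apply_of_semiconj LX_inlTP, pow_apply_of_semiconj LY_inrTP,
      pow_apply_of_semiconj LX_inrTP]

lemma liftTP_inrTP {F : R × Q →ₗ[ℂ] TP (R × Q)} {G : Q →ₗ[ℂ] TP R} {G' : Q →ₗ[ℂ] TP Q}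
    (h : ∀ x, F (0, x) = inlTP (G x) + inrTP (G' x)) (S : TP Q) :
    liftTP F (inrTP S) = inlTP (liftTP G S) + inrTP (liftTP G' S) := by
  induction S using Finsupp.induction_linear with
  | zero => simp
  | add S S' hS hS' => simp only [map_add, hS, hS']; abel
  | single p a =>
    rw [inrTP_single, liftTP_single,
      liftTP_single, liftTP_single, h, map_add, map_add, pow_apply_of_semiconj LY_inlTP,
      pow_apply_of_semiconj LX_inlTP, pow_apply_of_semiconj LY_inrTP,
      pow_apply_of_semiconj LX_inrTP]

lemma liftTP_inlTP' {F : R × Q →ₗ[ℂ] TP (R × Q)} {G : R →ₗ[ℂ] TP R}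
    (h : ∀ a, F (a, 0) = inlTP (G a)) (S : TP R) : liftTP F (inlTP S) = inlTP (liftTP G S) := by
  simpa using liftTP_inlTP (F := F) (G := G) (G' := 0) (fun a => by simpa using h a) S

lemma liftTP_inrTP' {F : R × Q →ₗ[ℂ] TP (R × Q)} {G' : Q →ₗ[ℂ] TP Q}
    (h : ∀ x, F (0, x) = inrTP (G' x)) (S : TP Q) : liftTP F (inrTP S) = inrTP (liftTP G' S) := by
  simpa using liftTP_inrTP (F := F) (G := 0) (G' := G') (fun x => by simpa using h x) S

end Embedding

section UnifiedProduct

variable {R Q : Type*} [AddCommGroup R] [Module ℂ R] [AddCommGroup Q] [Module ℂ Q]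
  {dR : R →ₗ[ℂ] R} {dQ : Q →ₗ[ℂ] Q}

/-- `A` acts on `R ⊕ Q` as `AR ⊕ AQ`, and substituting `AR` (resp. `AQ`) into a polynomial in
`−λ−∂` is substituting `AR'` (resp. `AQ'`). -/
structure Splits (dR : R →ₗ[ℂ] R) (dQ : Q →ₗ[ℂ] Q) (A : TP (R × Q) →ₗ[ℂ] TP (R × Q))
    (AR AR' : TP R →ₗ[ℂ] TP R) (AQ AQ' : TP Q →ₗ[ℂ] TP Q) : Prop where
  inl : ∀ P, A (inlTP P) = inlTP (AR P)
  inr : ∀ P, A (inrTP P) = inrTP (AQ P)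
  evA_evA1_left : ∀ p, evA AR (evA1 (nD dR) p) = evA AR' p
  evA_evA1_right : ∀ p, evA AQ (evA1 (nD dQ) p) = evA AQ' p

lemma splits_LX : Splits dR dQ LX LX (nX dR) LX (nX dQ) :=
  ⟨LX_inlTP, LX_inrTP, evA_LX_evA1_nD dR, evA_LX_evA1_nD dQ⟩

lemma splits_LY : Splits dR dQ LY LY (nY dR) LY (nY dQ) :=
  ⟨LY_inlTP, LY_inrTP, evA_LY_evA1_nD dR, evA_LY_evA1_nD dQ⟩

lemma splits_LX_add_LY : Splits dR dQ (LX + LY) (LX + LY) (nXY dR) (LX + LY) (nXY dQ) :=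
  ⟨fun P => by simp only [LinearMap.add_apply, map_add, LX_inlTP, LY_inlTP],
    fun P => by simp only [LinearMap.add_apply, map_add, LX_inrTP, LY_inrTP],
    evA_LX_add_LY_evA1_nD dR, evA_LX_add_LY_evA1_nD dQ⟩

variable {A : TP (R × Q) →ₗ[ℂ] TP (R × Q)} {AR AR' : TP R →ₗ[ℂ] TP R}
  {AQ AQ' : TP Q →ₗ[ℂ] TP Q}

lemma evA_inlP (hA : Splits dR dQ A AR AR' AQ AQ') (p : OP R) :
    evA A (inlP R Q p) = inlTP (evA AR p) :=
  (map_evA (f := LinearMap.inl ℂ R Q) (fun q => (hA.inl q).symm) (fun w => by simp) p).symm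

lemma evA_inrP (hA : Splits dR dQ A AR AR' AQ AQ') (p : OP Q) :
    evA A (inrP R Q p) = inrTP (evA AQ p) :=
  (map_evA (f := LinearMap.inr ℂ R Q) (fun q => (hA.inr q).symm) (fun w => by simp) p).symm

variable (Ω : ExtDatum dR dQ) (m : R →ₗ[ℂ] R →ₗ[ℂ] OP R)

local notation "♮" => uprod dR dQ Ω m

lemma uprod_inl_inr (a : R) (y : Q) :
    ♮ (a, 0) (0, y) = inlP R Q (evA1 (nD dR) (Ω.psi y a)) + inrP R Q (Ω.l a y) := by
  simp [uprod_apply]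

lemma uprod_inr_inl (x : Q) (b : R) :
    ♮ (0, x) (b, 0) = inlP R Q (Ω.phi x b) + inrP R Q (evA1 (nD dQ) (Ω.r b x)) := by
  simp [uprod_apply]

lemma uprod_inr_inr (hg : Ω.g = 0) (x y : Q) : ♮ (0, x) (0, y) = inrP R Q (Ω.o x y) := by
  simp [uprod_apply, hg]

variable (hA : Splits dR dQ A AR AR' AQ AQ')
include hA

lemma ev2_uprod_inl_inl (a b : R) : ev2 ♮ A (a, 0) (b, 0) = inlTP (ev2 m AR a b) := by
  rw [ev2, uprod_res, evA_inlP hA, ev2]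

lemma ev2_uprod_inl_inr (a : R) (y : Q) :
    ev2 ♮ A (a, 0) (0, y) = inlTP (ev2 Ω.psi AR' y a) + inrTP (ev2 Ω.l AQ a y) := by
  rw [ev2, uprod_inl_inr, map_add, evA_inlP hA, evA_inrP hA, hA.evA_evA1_left, ev2, ev2]

lemma ev2_uprod_inr_inl (x : Q) (b : R) :
    ev2 ♮ A (0, x) (b, 0) = inlTP (ev2 Ω.phi AR x b) + inrTP (ev2 Ω.r AQ' b x) := by
  rw [ev2, uprod_inr_inl, map_add, evA_inlP hA, evA_inrP hA, hA.evA_evA1_right, ev2, ev2]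

lemma ev2_uprod_inr_inr (hg : Ω.g = 0) (x y : Q) :
    ev2 ♮ A (0, x) (0, y) = inrTP (ev2 Ω.o AQ x y) := by
  rw [ev2, uprod_inr_inr Ω m hg, evA_inrP hA, ev2]

lemma exL_uprod_inlTP_inl (S : TP R) (b : R) :
    exL ♮ A (inlTP S) (b, 0) = inlTP (exL m AR S b) := by
  rw [exL_eq_liftTP, exL_eq_liftTP,
    liftTP_inlTP' (G := evA AR ∘ₗ m.flip b) (fun a => ev2_uprod_inl_inl Ω m hA a b)]

lemma exL_uprod_inlTP_inr (S : TP R) (z : Q) :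
    exL ♮ A (inlTP S) (0, z) = inlTP (exR Ω.psi AR' z S) + inrTP (exL Ω.l AQ S z) := by
  rw [exL_eq_liftTP, exL_eq_liftTP, exR_eq_liftTP,
    liftTP_inlTP (G := evA AR' ∘ₗ Ω.psi z) (G' := evA AQ ∘ₗ Ω.l.flip z)
      (fun a => ev2_uprod_inl_inr Ω m hA a z)]

lemma exL_uprod_inrTP_inl (S : TP Q) (b : R) :
    exL ♮ A (inrTP S) (b, 0) = inlTP (exL Ω.phi AR S b) + inrTP (exR Ω.r AQ' b S) := by
  rw [exL_eq_liftTP, exL_eq_liftTP, exR_eq_liftTP,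
    liftTP_inrTP (G := evA AR ∘ₗ Ω.phi.flip b) (G' := evA AQ' ∘ₗ Ω.r b)
      (fun x => ev2_uprod_inr_inl Ω m hA x b)]

lemma exL_uprod_inrTP_inr (hg : Ω.g = 0) (S : TP Q) (z : Q) :
    exL ♮ A (inrTP S) (0, z) = inrTP (exL Ω.o AQ S z) := by
  rw [exL_eq_liftTP, exL_eq_liftTP,
    liftTP_inrTP' (G' := evA AQ ∘ₗ Ω.o.flip z) (fun x => ev2_uprod_inr_inr Ω m hA hg x z)]

lemma exR_uprod_inl_inlTP (a : R) (S : TP R) :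
    exR ♮ A (a, 0) (inlTP S) = inlTP (exR m AR a S) := by
  rw [exR_eq_liftTP, exR_eq_liftTP,
    liftTP_inlTP' (G := evA AR ∘ₗ m a) (fun b => ev2_uprod_inl_inl Ω m hA a b)]

lemma exR_uprod_inl_inrTP (a : R) (S : TP Q) :
    exR ♮ A (a, 0) (inrTP S) = inlTP (exL Ω.psi AR' S a) + inrTP (exR Ω.l AQ a S) := by
  rw [exR_eq_liftTP, exR_eq_liftTP, exL_eq_liftTP,
    liftTP_inrTP (G := evA AR' ∘ₗ Ω.psi.flip a) (G' := evA AQ ∘ₗ Ω.l a)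
      (fun y => ev2_uprod_inl_inr Ω m hA a y)]

lemma exR_uprod_inr_inlTP (x : Q) (S : TP R) :
    exR ♮ A (0, x) (inlTP S) = inlTP (exR Ω.phi AR x S) + inrTP (exL Ω.r AQ' S x) := by
  rw [exR_eq_liftTP, exR_eq_liftTP, exL_eq_liftTP,
    liftTP_inlTP (G := evA AR ∘ₗ Ω.phi x) (G' := evA AQ' ∘ₗ Ω.r.flip x)
      (fun b => ev2_uprod_inr_inl Ω m hA x b)]

lemma exR_uprod_inr_inrTP (hg : Ω.g = 0) (x : Q) (S : TP Q) :
    exR ♮ A (0, x) (inrTP S) = inrTP (exR Ω.o AQ x S) := by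
  rw [exR_eq_liftTP, exR_eq_liftTP,
    liftTP_inrTP' (G' := evA AQ ∘ₗ Ω.o x) (fun y => ev2_uprod_inr_inr Ω m hA hg x y)]

end UnifiedProduct

section Conformal

variable {W : Type*} [AddCommGroup W] [Module ℂ W]

lemma nD_pD (d : W →ₗ[ℂ] W) (p : OP W) : nD d (pD d p) = pD d (nD d p) := by
  simp only [nD, LinearMap.sub_apply, LinearMap.neg_apply, map_sub, map_neg, lsh_pD]

lemma evA1_nD_lsh_add_pD (d : W →ₗ[ℂ] W) (p : OP W) :
    evA1 (nD d) (lsh p + pD d p) = -lsh (evA1 (nD d) p) := by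
  rw [map_add, evA1_lsh, evA1_pD (nD_pD d), nD, LinearMap.sub_apply, LinearMap.neg_apply]
  abel

lemma evA1_nD_neg_lsh (d : W →ₗ[ℂ] W) (p : OP W) :
    evA1 (nD d) (-lsh p) = lsh (evA1 (nD d) p) + pD d (evA1 (nD d) p) := by
  rw [map_neg, evA1_lsh, nD, LinearMap.sub_apply, LinearMap.neg_apply]
  abel

variable {R Q : Type*} [AddCommGroup R] [Module ℂ R] [AddCommGroup Q] [Module ℂ Q]
  (dR : R →ₗ[ℂ] R) (dQ : Q →ₗ[ℂ] Q)

lemma lsh_inlP (p : OP R) : lsh (inlP R Q p) = inlP R Q (lsh p) := lsh_mapRange _ p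

lemma lsh_inrP (p : OP Q) : lsh (inrP R Q p) = inrP R Q (lsh p) := lsh_mapRange _ p

lemma pD_inlP (p : OP R) : pD (dR.prodMap dQ) (inlP R Q p) = inlP R Q (pD dR p) := by
  ext <;> simp [pD, inlP]

lemma pD_inrP (p : OP Q) : pD (dR.prodMap dQ) (inrP R Q p) = inrP R Q (pD dQ p) := by
  ext <;> simp [pD, inrP]

lemma confBilin_uprod (Ω : ExtDatum dR dQ) {m : R →ₗ[ℂ] R →ₗ[ℂ] OP R}
    (hm : ConfBilin dR dR dR m) :
    ConfBilin (dR.prodMap dQ) (dR.prodMap dQ) (dR.prodMap dQ) (uprod dR dQ Ω m) := by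
  constructor
  · intro e₁ e₂
    rw [uprod_apply, uprod_apply, LinearMap.prodMap_apply]
    simp only [hm.dleft, Ω.hphi.dleft, Ω.hg.dleft, Ω.ho.dleft, Ω.hl.dleft, Ω.hpsi.dright,
      Ω.hr.dright, evA1_nD_lsh_add_pD]
    simp only [map_add, map_neg, lsh_inlP, lsh_inrP]
    abel
  · intro e₁ e₂
    rw [uprod_apply, uprod_apply, LinearMap.prodMap_apply]
    simp only [hm.dright, Ω.hphi.dright, Ω.hg.dright, Ω.ho.dright, Ω.hl.dright, Ω.hpsi.dleft,
      Ω.hr.dleft, evA1_nD_neg_lsh]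
    simp only [map_add, lsh_inlP, lsh_inrP, pD_inlP, pD_inrP]
    abel

end Conformal

section Cases

variable {R Q : Type*} [AddCommGroup R] [Module ℂ R] [AddCommGroup Q] [Module ℂ Q]
  {dR : R →ₗ[ℂ] R} {dQ : Q →ₗ[ℂ] Q} (Ω : ExtDatum dR dQ) (m : R →ₗ[ℂ] R →ₗ[ℂ] OP R)

local notation "♮" => uprod dR dQ Ω m

lemma lsDefect_uprod_inl_inl_inl (a b c : R) :
    lsDefect ♮ (a, 0) (b, 0) (c, 0) = inlTP (lsDefect m a b c) := by
  simp only [lsDefect, ev2_uprod_inl_inl Ω m splits_LX, ev2_uprod_inl_inl Ω m splits_LY,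
    exL_uprod_inlTP_inl Ω m splits_LX_add_LY, exR_uprod_inl_inlTP Ω m splits_LX,
    exR_uprod_inl_inlTP Ω m splits_LY, map_sub]

lemma lsDefect_uprod_inl_inl_inr_eq_zero_iff (a b : R) (z : Q) :
    lsDefect ♮ (a, 0) (b, 0) (0, z) = 0 ↔
      (exR Ω.psi (nXY dR) z (ev2 m LX a b - ev2 m LY b a)
          = exR m LX a (ev2 Ω.psi (nY dR) z b) - exR m LY b (ev2 Ω.psi (nX dR) z a)
            + exL Ω.psi (nX dR) (ev2 Ω.l LY b z) a - exL Ω.psi (nY dR) (ev2 Ω.l LX a z) b) ∧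
      (exL Ω.l (LX + LY) (ev2 m LX a b) z - exR Ω.l LX a (ev2 Ω.l LY b z)
          = exL Ω.l (LX + LY) (ev2 m LY b a) z - exR Ω.l LY b (ev2 Ω.l LX a z)) := by
  rw [eq_zero_iff_fstTP_sndTP]
  simp only [lsDefect, ev2_uprod_inl_inl Ω m splits_LX, ev2_uprod_inl_inl Ω m splits_LY,
    ev2_uprod_inl_inr Ω m splits_LX, ev2_uprod_inl_inr Ω m splits_LY,
    exL_uprod_inlTP_inr Ω m splits_LX_add_LY, exR_add_right,
    exR_uprod_inl_inlTP Ω m splits_LX, exR_uprod_inl_inlTP Ω m splits_LY,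
    exR_uprod_inl_inrTP Ω m splits_LX, exR_uprod_inl_inrTP Ω m splits_LY, exR_sub_right,
    map_add, map_sub, fstTP_inlTP, fstTP_inrTP, sndTP_inlTP, sndTP_inrTP]
  exact and_congr (eq_zero_iff_of_eq_sub (by abel)) (eq_zero_iff_of_eq_sub (by abel))

lemma lsDefect_uprod_inr_inl_inl_eq_zero_iff (hm : ∀ u v, m (dR u) v = -lsh (m u v))
    (a b : R) (x : Q) :
    lsDefect ♮ (0, x) (a, 0) (b, 0) = 0 ↔
      (exL m (LX + LY) (ev2 Ω.phi LX x a - ev2 Ω.psi LX x a) b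
            + exL Ω.phi (LX + LY) (ev2 Ω.r LY a x - ev2 Ω.l LY a x) b
          = exR Ω.phi LX x (ev2 m LY a b) - exR m LY a (ev2 Ω.phi LX x b)
            - exL Ω.psi (nY dR) (ev2 Ω.r (nX dQ) b x) a) ∧
      (exR Ω.r (nXY dQ) b (ev2 Ω.l LX a x) - exR Ω.l LX a (ev2 Ω.r (nY dQ) b x)
          = exR Ω.r (nXY dQ) b (ev2 Ω.r (nY dQ) a x) - exL Ω.r (nY dQ) (ev2 m LX a b) x) := by
  have hswap : sndTP (lsDefect ♮ (0, x) (a, 0) (b, 0))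
      = -swapXY (sndTP (lsDefect ♮ (a, 0) (0, x) (b, 0))) := by
    rw [lsDefect_swap, map_neg, sndTP_swapXY]
  rw [eq_zero_iff_fstTP_sndTP, hswap, neg_eq_zero, swapXY_eq_zero_iff]
  simp only [lsDefect, ev2_uprod_inl_inl Ω m splits_LX, ev2_uprod_inl_inl Ω m splits_LY,
    ev2_uprod_inl_inr Ω m splits_LX, ev2_uprod_inl_inr Ω m splits_LY,
    ev2_uprod_inr_inl Ω m splits_LX, ev2_uprod_inr_inl Ω m splits_LY,
    exL_uprod_inlTP_inl Ω m splits_LX_add_LY, exL_uprod_inrTP_inl Ω m splits_LX_add_LY,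
    exL_add_left, exR_add_right,
    exR_uprod_inl_inlTP Ω m splits_LX, exR_uprod_inl_inlTP Ω m splits_LY,
    exR_uprod_inl_inrTP Ω m splits_LX, exR_uprod_inl_inrTP Ω m splits_LY,
    exR_uprod_inr_inlTP Ω m splits_LX, exR_uprod_inr_inlTP Ω m splits_LY,
    map_add, map_sub, fstTP_inlTP, fstTP_inrTP, sndTP_inlTP, sndTP_inrTP,
    exL_sub_left]
  rw [exL_ev2_nY m hm, exL_ev2_nX Ω.phi Ω.hphi.dleft]
  exact and_congr (eq_zero_iff_of_eq_sub (by abel)) (eq_zero_iff_of_eq_sub (by abel))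

variable {Ω} (hg : Ω.g = 0)
include hg

lemma lsDefect_uprod_inl_inr_inr_eq_zero_iff (a : R) (x y : Q) :
    lsDefect ♮ (a, 0) (0, x) (0, y) = 0 ↔
      (exR Ω.psi (nXY dR) y (ev2 Ω.phi LX x a) - exR Ω.phi LX x (ev2 Ω.psi (nY dR) y a)
          = exR Ω.psi (nXY dR) y (ev2 Ω.psi (nY dR) x a) - exL Ω.psi (nY dR) (ev2 Ω.o LX x y) a) ∧
      (exL Ω.o (LX + LY) (ev2 Ω.l LX a x) y
            + exL Ω.l (LX + LY) (ev2 Ω.psi (nX dR) x a) y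
            - exR Ω.l LX a (ev2 Ω.o LY x y)
          = exL Ω.l (LX + LY) (ev2 Ω.phi LY x a) y
            + exL Ω.o (LX + LY) (ev2 Ω.r (nY dQ) a x) y
            - exL Ω.r (nY dQ) (ev2 Ω.psi (nX dR) y a) x
            - exR Ω.o LY x (ev2 Ω.l LX a y)) := by
  have hswap : fstTP (lsDefect ♮ (a, 0) (0, x) (0, y))
      = -swapXY (fstTP (lsDefect ♮ (0, x) (a, 0) (0, y))) := by
    rw [lsDefect_swap, map_neg, fstTP_swapXY]
  rw [eq_zero_iff_fstTP_sndTP, hswap, neg_eq_zero, swapXY_eq_zero_iff]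
  simp only [lsDefect, ev2_uprod_inl_inr Ω m splits_LX, ev2_uprod_inl_inr Ω m splits_LY,
    ev2_uprod_inr_inl Ω m splits_LX, ev2_uprod_inr_inl Ω m splits_LY,
    ev2_uprod_inr_inr Ω m splits_LX hg, ev2_uprod_inr_inr Ω m splits_LY hg,
    exL_uprod_inlTP_inr Ω m splits_LX_add_LY, exL_uprod_inrTP_inr Ω m splits_LX_add_LY hg,
    exL_add_left, exR_add_right,
    exR_uprod_inl_inrTP Ω m splits_LX, exR_uprod_inl_inrTP Ω m splits_LY,
    exR_uprod_inr_inlTP Ω m splits_LX, exR_uprod_inr_inlTP Ω m splits_LY,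
    exR_uprod_inr_inrTP Ω m splits_LX hg, exR_uprod_inr_inrTP Ω m splits_LY hg,
    map_add, map_sub, fstTP_inlTP, fstTP_inrTP, sndTP_inlTP, sndTP_inrTP]
  exact and_congr (eq_zero_iff_of_eq_sub (by abel)) (eq_zero_iff_of_eq_sub (by abel))

lemma lsDefect_uprod_inr_inr_inl_eq_zero_iff (a : R) (x y : Q) :
    lsDefect ♮ (0, x) (0, y) (a, 0) = 0 ↔
      (exL Ω.phi (LX + LY) (ev2 Ω.o LX x y) a - exR Ω.phi LX x (ev2 Ω.phi LY y a)
          = exL Ω.phi (LX + LY) (ev2 Ω.o LY y x) a - exR Ω.phi LY y (ev2 Ω.phi LX x a)) ∧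
      (exR Ω.r (nXY dQ) a (ev2 Ω.o LX x y - ev2 Ω.o LY y x)
          = exL Ω.r (nX dQ) (ev2 Ω.phi LY y a) x - exL Ω.r (nY dQ) (ev2 Ω.phi LX x a) y
            + exR Ω.o LX x (ev2 Ω.r (nY dQ) a y) - exR Ω.o LY y (ev2 Ω.r (nX dQ) a x)) := by
  rw [eq_zero_iff_fstTP_sndTP]
  simp only [lsDefect, ev2_uprod_inr_inl Ω m splits_LX, ev2_uprod_inr_inl Ω m splits_LY,
    ev2_uprod_inr_inr Ω m splits_LX hg, ev2_uprod_inr_inr Ω m splits_LY hg,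
    exL_uprod_inrTP_inl Ω m splits_LX_add_LY, exR_add_right,
    exR_uprod_inr_inlTP Ω m splits_LX, exR_uprod_inr_inlTP Ω m splits_LY,
    exR_uprod_inr_inrTP Ω m splits_LX hg, exR_uprod_inr_inrTP Ω m splits_LY hg, exR_sub_right,
    map_add, map_sub, fstTP_inlTP, fstTP_inrTP, sndTP_inlTP, sndTP_inrTP]
  exact and_congr (eq_zero_iff_of_eq_sub (by abel)) (eq_zero_iff_of_eq_sub (by abel))

lemma lsDefect_uprod_inr_inr_inr (x y z : Q) :
    lsDefect ♮ (0, x) (0, y) (0, z) = inrTP (lsDefect Ω.o x y z) := by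
  simp only [lsDefect, ev2_uprod_inr_inr Ω m splits_LX hg, ev2_uprod_inr_inr Ω m splits_LY hg,
    exL_uprod_inrTP_inr Ω m splits_LX_add_LY hg, exR_uprod_inr_inrTP Ω m splits_LX hg,
    exR_uprod_inr_inrTP Ω m splits_LY hg, map_sub]

end Cases

end BicrossedProduct

open BicrossedProduct

/-- **Bicrossed products (Section 5.2).**  Let `Ω(R,Q) = (φ, ψ, l, r, ∘)` be an extending
datum with `g` trivial.  Then `Ω(R,Q)` is a left-symmetric conformal extending structure of
`R` by `Q` iff `(Q, ∘_λ)` is a left-symmetric conformal algebra, `R` is a `Q`-bimodule via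
`(φ, ψ)`, `Q` is an `R`-bimodule via `(l, r)`, and the conditions (i)–(iv) hold. -/
theorem bicrossed_product_iff
    {R Q : Type*} [AddCommGroup R] [Module ℂ R] [AddCommGroup Q] [Module ℂ Q]
    (dR : R →ₗ[ℂ] R) (dQ : Q →ₗ[ℂ] Q)
    (m : R →ₗ[ℂ] R →ₗ[ℂ] OP R) (hm : IsLSCA dR m)
    (Ω : ExtDatum dR dQ) (hg : Ω.g = 0) :
    IsLSCA (dR.prodMap dQ) (uprod dR dQ Ω m) ↔
      (IsLSCA dQ Ω.o ∧
      IsBimodule dR Ω.o Ω.phi Ω.psi ∧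
      IsBimodule dQ m Ω.l Ω.r ∧
      -- (i) = (LC1)
      (∀ (a b : R) (x : Q),
        exL m (LX + LY) (ev2 Ω.phi LX x a - ev2 Ω.psi LX x a) b
            + exL Ω.phi (LX + LY) (ev2 Ω.r LY a x - ev2 Ω.l LY a x) b
          = exR Ω.phi LX x (ev2 m LY a b) - exR m LY a (ev2 Ω.phi LX x b)
            - exL Ω.psi (nY dR) (ev2 Ω.r (nX dQ) b x) a) ∧
      -- (ii) = (LC3)
      (∀ (a b : R) (x : Q),
        exR Ω.psi (nXY dR) x (ev2 m LX a b - ev2 m LY b a)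
          = exR m LX a (ev2 Ω.psi (nY dR) x b) - exR m LY b (ev2 Ω.psi (nX dR) x a)
            + exL Ω.psi (nX dR) (ev2 Ω.l LY b x) a - exL Ω.psi (nY dR) (ev2 Ω.l LX a x) b) ∧
      -- (iii) = (LC6)
      (∀ (a : R) (x y : Q),
        exL Ω.o (LX + LY) (ev2 Ω.l LX a x) y
            + exL Ω.l (LX + LY) (ev2 Ω.psi (nX dR) x a) y
            - exR Ω.l LX a (ev2 Ω.o LY x y)
          = exL Ω.l (LX + LY) (ev2 Ω.phi LY x a) y
            + exL Ω.o (LX + LY) (ev2 Ω.r (nY dQ) a x) y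
            - exL Ω.r (nY dQ) (ev2 Ω.psi (nX dR) y a) x
            - exR Ω.o LY x (ev2 Ω.l LX a y)) ∧
      -- (iv) = (LC8)
      (∀ (a : R) (x y : Q),
        exR Ω.r (nXY dQ) a (ev2 Ω.o LX x y - ev2 Ω.o LY y x)
          = exL Ω.r (nX dQ) (ev2 Ω.phi LY y a) x - exL Ω.r (nY dQ) (ev2 Ω.phi LX x a) y
            + exR Ω.o LX x (ev2 Ω.r (nY dQ) a y) - exR Ω.o LY y (ev2 Ω.r (nX dQ) a x))) := by
  have hRRR : ∀ a b c : R, lsDefect (uprod dR dQ Ω m) (a, 0) (b, 0) (c, 0) = 0 := fun a b c => by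
    rw [lsDefect_uprod_inl_inl_inl, ((isLSCA_iff dR m).1 hm).2 a b c, map_zero]
  rw [isLSCA_iff, forall_lsDefect_prod_eq_zero_iff, isLSCA_iff]
  simp only [confBilin_uprod dR dQ Ω hm.conf, Ω.ho, true_and, hRRR, implies_true,
    lsDefect_uprod_inr_inr_inr m hg, inrTP_eq_zero_iff,
    lsDefect_uprod_inl_inl_inr_eq_zero_iff,
    lsDefect_uprod_inr_inl_inl_eq_zero_iff _ _ hm.conf.dleft,
    lsDefect_uprod_inl_inr_inr_eq_zero_iff _ hg, lsDefect_uprod_inr_inr_inl_eq_zero_iff _ hg,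
    forall_and]
  constructor
  · rintro ⟨⟨hii, hbm1Q⟩, ⟨hi, hbm2Q⟩, ⟨hbm2R, hiii⟩, ⟨hbm1R, hiv⟩, hQ⟩
    exact ⟨hQ, ⟨fun x y a => hbm1R a x y, fun x y a => hbm2R a x y⟩, ⟨hbm1Q, hbm2Q⟩,
      hi, hii, hiii, hiv⟩
  · rintro ⟨hQ, ⟨hbm1R, hbm2R⟩, ⟨hbm1Q, hbm2Q⟩, hi, hii, hiii, hiv⟩
    exact ⟨⟨hii, hbm1Q⟩, ⟨hi, hbm2Q⟩, ⟨fun a x y => hbm2R x y a, hiii⟩,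
      ⟨fun a x y => hbm1R x y a, hiv⟩, hQ⟩
end
end
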